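/- arXiv:2307.06157 — 11 statements merged into one kernel-verified Lean document; each statement's English description precedes it below -/
import Mathlib

section
/- Let K be the random row-stochastic matrix K(g) = (1−q)I + q Σ_{i=1}^N e_i e_{g(i)}ᵀ, where g is a random map distributed according to μ. Then the expectation of K X Kᵀ satisfies, for every X ∈ ℝ^{N×N}: E[K X Kᵀ] = P_q X P_qᵀ + q²( Ψ⁻(P·Ψ(X)) − Ψ⁻(Ψ(P X Pᵀ)) ), i.e. Σ_g (∏_{i=1}^N p_{i,g(i)}) · K(g) X K(g)ᵀ = P_q X P_qᵀ + q²( Ψ⁻(P·Ψ(X)) − Ψ⁻(Ψ(P X Pᵀ)) ). -/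
open Matrix BigOperators


lemma pisum (N : ℕ) (F : Fin N → Fin N → ℝ) :
    ∑ g : Fin N → Fin N, ∏ i, F i (g i) = ∏ i, ∑ k, F i k := by
  rw [Finset.prod_univ_sum, Fintype.piFinset_univ]

lemma E1 (N : ℕ) (P : Matrix (Fin N) (Fin N) ℝ) (hProw : ∀ i, ∑ j, P i j = 1)
    (i : Fin N) (f : Fin N → ℝ) :
    ∑ g : Fin N → Fin N, (∏ i', P i' (g i')) * f (g i) = ∑ k, P i k * f k := by
  have h : ∀ g : Fin N → Fin N, (∏ i', P i' (g i')) * f (g i)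
      = ∏ i', (P i' (g i') * if i' = i then f (g i') else 1) := by
    intro g
    rw [Finset.prod_mul_distrib, Finset.prod_ite_eq' Finset.univ i (fun i' => f (g i')),
      if_pos (Finset.mem_univ i)]
  simp_rw [h]
  rw [pisum N (fun i' k => P i' k * if i' = i then f k else 1), Finset.prod_eq_single i]
  · simp
  · intro b _ hb; simp [hb, hProw b]
  · intro h; exact absurd (Finset.mem_univ i) h

lemma sumw (N : ℕ) (P : Matrix (Fin N) (Fin N) ℝ) (hProw : ∀ i, ∑ j, P i j = 1) :
    ∑ g : Fin N → Fin N, (∏ i', P i' (g i')) = 1 := by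
  rw [pisum N (fun i' k => P i' k)]
  simp [hProw]

lemma E2 (N : ℕ) (P : Matrix (Fin N) (Fin N) ℝ) (hProw : ∀ i, ∑ j, P i j = 1)
    (i j : Fin N) (hij : i ≠ j) (f h : Fin N → ℝ) :
    ∑ g : Fin N → Fin N, (∏ i', P i' (g i')) * (f (g i) * h (g j))
      = (∑ k, P i k * f k) * (∑ l, P j l * h l) := by
  have key : ∀ g : Fin N → Fin N, (∏ i', P i' (g i')) * (f (g i) * h (g j))
      = ∏ i', (P i' (g i') * ((if i' = i then f (g i') else 1) * (if i' = j then h (g i') else 1))) := by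
    intro g
    rw [Finset.prod_mul_distrib, Finset.prod_mul_distrib,
      Finset.prod_ite_eq' Finset.univ i (fun i' => f (g i')),
      Finset.prod_ite_eq' Finset.univ j (fun i' => h (g i')),
      if_pos (Finset.mem_univ i), if_pos (Finset.mem_univ j)]
  simp_rw [key]
  rw [pisum N (fun i' k => P i' k * ((if i' = i then f k else 1) * (if i' = j then h k else 1)))]
  rw [← Finset.mul_prod_erase _ _ (Finset.mem_univ i),
    ← Finset.mul_prod_erase _ _ (Finset.mem_erase.2 ⟨Ne.symm hij, Finset.mem_univ j⟩)]
  have h1 : ∏ x ∈ (Finset.univ.erase i).erase j,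
      (∑ k, P x k * ((if x = i then f k else 1) * (if x = j then h k else 1))) = 1 := by
    apply Finset.prod_eq_one
    intro x hx
    simp only [Finset.mem_erase] at hx
    simp [hx.1, hx.2.1, hProw x]
  rw [h1]
  simp [hij, hij.symm]

lemma EA (N : ℕ) (P : Matrix (Fin N) (Fin N) ℝ) (hProw : ∀ i, ∑ j, P i j = 1) :
    ∑ g : Fin N → Fin N, (∏ i', P i' (g i')) •
        (Matrix.of fun i j => if g i = j then (1:ℝ) else 0) = P := by
  ext i j
  rw [Matrix.sum_apply]
  simp only [Matrix.smul_apply, Matrix.of_apply, smul_eq_mul]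
  rw [E1 N P hProw i (fun k => if k = j then (1:ℝ) else 0)]
  simp

lemma Equad (N : ℕ) (P : Matrix (Fin N) (Fin N) ℝ) (hProw : ∀ i, ∑ j, P i j = 1)
    (X : Matrix (Fin N) (Fin N) ℝ) :
    ∑ g : Fin N → Fin N, (∏ i', P i' (g i')) •
        ((Matrix.of fun i j => if g i = j then (1:ℝ) else 0) * X *
         (Matrix.of fun i j => if g i = j then (1:ℝ) else 0)ᵀ)
      = P * X * Pᵀ + (Matrix.diagonal (P *ᵥ Matrix.diag X)
          - Matrix.diagonal (Matrix.diag (P * X * Pᵀ))) := by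
  have hent : ∀ (g : Fin N → Fin N) (i j : Fin N),
      ((Matrix.of fun i j => if g i = j then (1:ℝ) else 0) * X *
       (Matrix.of fun i j => if g i = j then (1:ℝ) else 0)ᵀ) i j = X (g i) (g j) := by
    intro g i j
    simp [Matrix.mul_apply, Matrix.transpose_apply, ite_mul, mul_ite, Finset.sum_ite_eq]
  ext i j
  rw [Matrix.sum_apply]
  simp only [Matrix.smul_apply, smul_eq_mul, hent]
  by_cases hij : i = j
  · subst hij
    rw [E1 N P hProw i (fun k => X k k)]
    simp [Matrix.diagonal, Matrix.mulVec, Matrix.diag, dotProduct]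
  · have hX : ∀ g : Fin N → Fin N, X (g i) (g j)
        = ∑ k, ∑ l, (if g i = k then (1:ℝ) else 0) * (if g j = l then (1:ℝ) else 0) * X k l := by
      intro g
      simp [ite_mul, mul_ite, Finset.sum_ite_eq]
    simp_rw [hX, Finset.mul_sum]
    rw [Finset.sum_comm]
    have : ∀ k, ∑ g : Fin N → Fin N, ∑ l, (∏ i', P i' (g i')) *
        ((if g i = k then (1:ℝ) else 0) * (if g j = l then (1:ℝ) else 0) * X k l)
        = ∑ l, P i k * P j l * X k l := by
      intro k
      rw [Finset.sum_comm]
      refine Finset.sum_congr rfl fun l _ => ?_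
      have := E2 N P hProw i j hij (fun m => if m = k then (1:ℝ) else 0) (fun m => if m = l then (1:ℝ) else 0)
      calc ∑ g : Fin N → Fin N, (∏ i', P i' (g i')) *
            ((if g i = k then (1:ℝ) else 0) * (if g j = l then (1:ℝ) else 0) * X k l)
          = (∑ g : Fin N → Fin N, (∏ i', P i' (g i')) *
            ((if g i = k then (1:ℝ) else 0) * (if g j = l then (1:ℝ) else 0))) * X k l := by
            rw [Finset.sum_mul]; exact Finset.sum_congr rfl fun g _ => by ring
        _ = P i k * P j l * X k l := by
            rw [this]; simp [Finset.sum_ite_eq]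
    simp_rw [this]
    simp [Matrix.mul_apply, Matrix.diagonal, hij, Matrix.transpose_apply, Finset.sum_mul, Finset.mul_sum]
    rw [Finset.sum_comm]
    exact Finset.sum_congr rfl fun k _ => Finset.sum_congr rfl fun l _ => by ring

/-- For the random row-stochastic matrix
`K(g) = (1−q)I + q ∑ᵢ eᵢ e_{g(i)}ᵀ` with `g` distributed according to
`μ({g}) = ∏ᵢ p_{i,g(i)}`, we have
`E[K X Kᵀ] = P_q X P_qᵀ + q² (Ψ⁻(P·Ψ(X)) − Ψ⁻(Ψ(P X Pᵀ)))`. -/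
theorem stmt0 (N : ℕ) (hN : 1 ≤ N) (P : Matrix (Fin N) (Fin N) ℝ)
    (hPnonneg : ∀ i j, 0 ≤ P i j) (hProw : ∀ i, ∑ j, P i j = 1)
    (q : ℝ) (hq0 : 0 ≤ q) (hq1 : q ≤ 1)
    (X : Matrix (Fin N) (Fin N) ℝ) :
    ∑ g : Fin N → Fin N, (∏ i, P i (g i)) •
        (((1 - q) • (1 : Matrix (Fin N) (Fin N) ℝ)
            + q • Matrix.of fun i j => if g i = j then (1 : ℝ) else 0) * X *
         ((1 - q) • (1 : Matrix (Fin N) (Fin N) ℝ)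
            + q • Matrix.of fun i j => if g i = j then (1 : ℝ) else 0)ᵀ)
      = ((1 - q) • (1 : Matrix (Fin N) (Fin N) ℝ) + q • P) * X *
          ((1 - q) • (1 : Matrix (Fin N) (Fin N) ℝ) + q • P)ᵀ
        + q ^ 2 •
            (Matrix.diagonal (P *ᵥ Matrix.diag X)
              - Matrix.diagonal (Matrix.diag (P * X * Pᵀ))) := by
  have expand : ∀ A : Matrix (Fin N) (Fin N) ℝ,
      ((1 - q) • (1 : Matrix (Fin N) (Fin N) ℝ) + q • A) * X *
        ((1 - q) • (1 : Matrix (Fin N) (Fin N) ℝ) + q • A)ᵀ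
      = ((1-q)*(1-q)) • X + ((1-q)*q) • (X * Aᵀ) + (q*(1-q)) • (A * X)
        + (q*q) • (A * X * Aᵀ) := by
    intro A
    simp only [Matrix.transpose_add, Matrix.transpose_smul, Matrix.transpose_one,
      Matrix.add_mul, Matrix.mul_add, Matrix.smul_mul, Matrix.mul_smul, smul_smul,
      Matrix.one_mul, Matrix.mul_one]
    module
  simp_rw [expand, smul_add, smul_smul]
  rw [Finset.sum_add_distrib, Finset.sum_add_distrib, Finset.sum_add_distrib]
  have hw := sumw N P hProw
  have hT1 : ∑ g : Fin N → Fin N, ((∏ i, P i (g i)) * ((1-q)*(1-q))) • X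
      = ((1-q)*(1-q)) • X := by
    rw [← Finset.sum_smul, ← Finset.sum_mul, hw, one_mul]
  have hA := EA N P hProw
  have hT2 : ∑ g : Fin N → Fin N, ((∏ i, P i (g i)) * ((1-q)*q)) •
      (X * (Matrix.of fun i j => if g i = j then (1:ℝ) else 0)ᵀ)
      = ((1-q)*q) • (X * Pᵀ) := by
    have h2 : ∑ g : Fin N → Fin N, (∏ i, P i (g i)) •
        (X * (Matrix.of fun i j => if g i = j then (1:ℝ) else 0)ᵀ)
        = X * (∑ g : Fin N → Fin N, (∏ i', P i' (g i')) •
            (Matrix.of fun i j => if g i = j then (1:ℝ) else 0))ᵀ := by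
      rw [Matrix.transpose_sum, Matrix.mul_sum]
      exact Finset.sum_congr rfl fun g _ => by rw [Matrix.transpose_smul, Matrix.mul_smul]
    calc ∑ g : Fin N → Fin N, ((∏ i, P i (g i)) * ((1-q)*q)) •
          (X * (Matrix.of fun i j => if g i = j then (1:ℝ) else 0)ᵀ)
        = ((1-q)*q) • ∑ g : Fin N → Fin N, (∏ i, P i (g i)) •
            (X * (Matrix.of fun i j => if g i = j then (1:ℝ) else 0)ᵀ) := by
          rw [Finset.smul_sum]
          exact Finset.sum_congr rfl fun g _ => by rw [smul_smul, mul_comm]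
      _ = ((1-q)*q) • (X * Pᵀ) := by rw [h2, hA]
  have hT3 : ∑ g : Fin N → Fin N, ((∏ i, P i (g i)) * (q*(1-q))) •
      ((Matrix.of fun i j => if g i = j then (1:ℝ) else 0) * X)
      = (q*(1-q)) • (P * X) := by
    have h3 : ∑ g : Fin N → Fin N, (∏ i, P i (g i)) •
        ((Matrix.of fun i j => if g i = j then (1:ℝ) else 0) * X)
        = (∑ g : Fin N → Fin N, (∏ i', P i' (g i')) •
            (Matrix.of fun i j => if g i = j then (1:ℝ) else 0)) * X := by
      rw [Matrix.sum_mul]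
      exact Finset.sum_congr rfl fun g _ => by rw [Matrix.smul_mul]
    calc ∑ g : Fin N → Fin N, ((∏ i, P i (g i)) * (q*(1-q))) •
          ((Matrix.of fun i j => if g i = j then (1:ℝ) else 0) * X)
        = (q*(1-q)) • ∑ g : Fin N → Fin N, (∏ i, P i (g i)) •
            ((Matrix.of fun i j => if g i = j then (1:ℝ) else 0) * X) := by
          rw [Finset.smul_sum]
          exact Finset.sum_congr rfl fun g _ => by rw [smul_smul, mul_comm]
      _ = (q*(1-q)) • (P * X) := by rw [h3, hA]
  have hT4 : ∑ g : Fin N → Fin N, ((∏ i, P i (g i)) * (q*q)) •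
      ((Matrix.of fun i j => if g i = j then (1:ℝ) else 0) * X *
        (Matrix.of fun i j => if g i = j then (1:ℝ) else 0)ᵀ)
      = (q*q) • (P * X * Pᵀ + (Matrix.diagonal (P *ᵥ Matrix.diag X)
          - Matrix.diagonal (Matrix.diag (P * X * Pᵀ)))) := by
    rw [← Equad N P hProw X, Finset.smul_sum]
    exact Finset.sum_congr rfl fun g _ => by rw [smul_smul, mul_comm]
  rw [hT1, hT2, hT3, hT4, smul_add, pow_two]
  abel
end

section
/- Let L(g) = Σ_{i=1}^N e_i e_{g(i)}ᵀ for a map g : {1,…,N}→{1,…,N}. Then for every X ∈ ℝ^{N×N}, the expectation of L X Lᵀ under μ satisfies Σ_g (∏_{i=1}^N p_{i,g(i)}) · L(g) X L(g)ᵀ = P X Pᵀ − Ψ⁻(Ψ(P X Pᵀ)) + Ψ⁻(P·Ψ(X)). -/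
open Matrix BigOperators

lemma sum_prod_aux (N : ℕ) (f : Fin N → Fin N → ℝ) :
    ∑ g : Fin N → Fin N, ∏ k, f k (g k) = ∏ k, ∑ a, f k a := by
  rw [Finset.prod_univ_sum, Fintype.piFinset_univ]

lemma key1 (N : ℕ) (P : Matrix (Fin N) (Fin N) ℝ)
    (hProw : ∀ i, ∑ j, P i j = 1) (i a : Fin N) :
    ∑ g : Fin N → Fin N, (∏ k, P k (g k)) * (if g i = a then (1:ℝ) else 0) = P i a := by
  have h1 : ∀ g : Fin N → Fin N,
      (∏ k, P k (g k)) * (if g i = a then (1:ℝ) else 0)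
      = ∏ k, P k (g k) * (if i = k then (if g k = a then (1:ℝ) else 0) else 1) := by
    intro g
    rw [Finset.prod_mul_distrib]
    simp
  simp only [h1]
  rw [sum_prod_aux N (fun k c => P k c * (if i = k then (if c = a then (1:ℝ) else 0) else 1))]
  have h2 : ∀ k : Fin N, (∑ c, P k c * (if i = k then (if c = a then (1:ℝ) else 0) else 1))
      = (if i = k then P i a else 1) := by
    intro k
    by_cases hik : i = k
    · subst hik
      simp [mul_ite]
    · simp [hik, hProw k]
  simp only [h2]
  simp

lemma key2 (N : ℕ) (P : Matrix (Fin N) (Fin N) ℝ)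
    (hProw : ∀ i, ∑ j, P i j = 1) (i j a b : Fin N) (hij : i ≠ j) :
    ∑ g : Fin N → Fin N, (∏ k, P k (g k)) *
      ((if g i = a then (1:ℝ) else 0) * (if g j = b then 1 else 0)) = P i a * P j b := by
  have h1 : ∀ g : Fin N → Fin N,
      (∏ k, P k (g k)) * ((if g i = a then (1:ℝ) else 0) * (if g j = b then 1 else 0))
      = ∏ k, P k (g k) * ((if i = k then (if g k = a then (1:ℝ) else 0) else 1) *
          (if j = k then (if g k = b then 1 else 0) else 1)) := by
    intro g
    rw [Finset.prod_mul_distrib, Finset.prod_mul_distrib]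
    simp
  simp only [h1]
  rw [sum_prod_aux N (fun k c => P k c * ((if i = k then (if c = a then (1:ℝ) else 0) else 1) * (if j = k then (if c = b then 1 else 0) else 1)))]
  have h2 : ∀ k : Fin N, (∑ c, P k c * ((if i = k then (if c = a then (1:ℝ) else 0) else 1) *
        (if j = k then (if c = b then 1 else 0) else 1)))
      = (if i = k then P i a else 1) * (if j = k then P j b else 1) := by
    intro k
    by_cases hik : i = k
    · subst hik
      have hji : ¬ j = i := fun e => hij e.symm
      simp [hji, mul_ite]
    · by_cases hjk : j = k
      · subst hjk
        simp [hik, mul_ite]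
      · simp [hik, hjk, hProw k]
  simp only [h2]
  rw [Finset.prod_mul_distrib]
  simp


/-- With `L(g) = ∑ᵢ eᵢ e_{g(i)}ᵀ` and `g` distributed according to
`μ({g}) = ∏ᵢ p_{i,g(i)}`, for every `X`:
`E[L X Lᵀ] = P X Pᵀ − Ψ⁻(Ψ(P X Pᵀ)) + Ψ⁻(P·Ψ(X))`. -/
theorem stmt1 (N : ℕ) (hN : 1 ≤ N) (P : Matrix (Fin N) (Fin N) ℝ)
    (hPnonneg : ∀ i j, 0 ≤ P i j) (hProw : ∀ i, ∑ j, P i j = 1)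
    (X : Matrix (Fin N) (Fin N) ℝ) :
    ∑ g : Fin N → Fin N, (∏ i, P i (g i)) •
        ((Matrix.of fun i j => if g i = j then (1 : ℝ) else 0) * X *
         (Matrix.of fun i j => if g i = j then (1 : ℝ) else 0)ᵀ)
      = P * X * Pᵀ - Matrix.diagonal (Matrix.diag (P * X * Pᵀ))
          + Matrix.diagonal (P *ᵥ Matrix.diag X) := by
  ext i j
  have hL : ∀ (g : Fin N → Fin N),
      (((Matrix.of fun i j => if g i = j then (1 : ℝ) else 0) * X *
        (Matrix.of fun i j => if g i = j then (1 : ℝ) else 0)ᵀ)) i j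
      = X (g i) (g j) := by
    intro g
    simp [Matrix.mul_apply, Matrix.transpose_apply, ite_mul, mul_ite]
  rw [Matrix.sum_apply]
  simp only [Matrix.smul_apply, hL, smul_eq_mul]
  by_cases hij : i = j
  · subst hij
    have hR : (P * X * Pᵀ - Matrix.diagonal (Matrix.diag (P * X * Pᵀ))
          + Matrix.diagonal (P *ᵥ Matrix.diag X)) i i = ∑ a, P i a * X a a := by
      simp [Matrix.sub_apply, Matrix.add_apply, Matrix.diagonal_apply_eq,
        Matrix.mulVec, dotProduct, Matrix.diag]
    rw [hR]
    have hX : ∀ g : Fin N → Fin N, (∏ k, P k (g k)) * X (g i) (g i)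
        = ∑ a, ((∏ k, P k (g k)) * (if g i = a then (1:ℝ) else 0)) * X a a := by
      intro g
      rw [Finset.sum_eq_single (g i)] <;> simp +contextual [eq_comm]
    simp only [hX]
    rw [Finset.sum_comm]
    refine Finset.sum_congr rfl fun a _ => ?_
    rw [← Finset.sum_mul, key1 N P hProw i a]
  · have hR : (P * X * Pᵀ - Matrix.diagonal (Matrix.diag (P * X * Pᵀ))
          + Matrix.diagonal (P *ᵥ Matrix.diag X)) i j = ∑ a, ∑ b, P i a * X a b * P j b := by
      simp [Matrix.sub_apply, Matrix.add_apply, Matrix.diagonal_apply_ne _ hij,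
        Matrix.mul_apply, Finset.sum_mul]
      rw [Finset.sum_comm]
    rw [hR]
    have hX : ∀ g : Fin N → Fin N, (∏ k, P k (g k)) * X (g i) (g j)
        = ∑ a, ∑ b, ((∏ k, P k (g k)) *
            ((if g i = a then (1:ℝ) else 0) * (if g j = b then 1 else 0))) * X a b := by
      intro g
      rw [Finset.sum_eq_single (g i)]
      · rw [Finset.sum_eq_single (g j)]
        · simp
        · intro b _ hb
          simp [(Ne.symm hb : g j ≠ b)]
        · simp
      · intro a _ ha
        simp [(Ne.symm ha : g i ≠ a)]
      · simp
    simp only [hX]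
    rw [Finset.sum_comm]
    refine Finset.sum_congr rfl fun a _ => ?_
    rw [Finset.sum_comm]
    refine Finset.sum_congr rfl fun b _ => ?_
    rw [← Finset.sum_mul, key2 N P hProw i j a b hij]
    ring
end

section
/- If X ∈ ℝ^{N×N} is symmetric positive semi-definite, then Φ(X) is positive semi-definite; that is, Φ preserves the cone of positive semi-definite matrices. -/
open Matrix BigOperators

/-!
The congruence `P_q X P_qᵀ` of a positive semidefinite `X` is positive semidefinite, so it
suffices that the diagonal correction is nonnegative. Its `i`-th entry is
`∑ⱼ pⱼ Xⱼⱼ - pᵀ X p` for the probability vector `p = P i`, and this is a variance: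
`∑ⱼ pⱼ Xⱼⱼ - pᵀ X p = ∑ⱼ pⱼ (eⱼ - p)ᵀ X (eⱼ - p) ≥ 0`.
-/

noncomputable def Phi {N : ℕ} (P : Matrix (Fin N) (Fin N) ℝ) (q : ℝ)
    (X : Matrix (Fin N) (Fin N) ℝ) : Matrix (Fin N) (Fin N) ℝ :=
  ((1 - q) • (1 : Matrix (Fin N) (Fin N) ℝ) + q • P) * X *
      ((1 - q) • (1 : Matrix (Fin N) (Fin N) ℝ) + q • P)ᵀ
    + q ^ 2 •
        (Matrix.diagonal (P *ᵥ Matrix.diag X)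
          - Matrix.diagonal (Matrix.diag (P * X * Pᵀ)))

namespace Matrix

variable {n : Type*} [Fintype n]

theorem PosSemidef.dotProduct_mulVec_le_sum_mul_diag {X : Matrix n n ℝ} (hX : X.PosSemidef)
    {p : n → ℝ} (hp : 0 ≤ p) (hp_sum : ∑ j, p j = 1) :
    p ⬝ᵥ X *ᵥ p ≤ ∑ j, p j * X j j := by
  classical
  have hvar : ∑ j, p j * ((Pi.single j 1 - p) ⬝ᵥ X *ᵥ (Pi.single j 1 - p))
      = ∑ j, p j * X j j - p ⬝ᵥ X *ᵥ p := by
    simp only [mulVec_sub, sub_dotProduct, dotProduct_sub, single_dotProduct, mulVec_single_one,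
      one_mul, mul_sub, Finset.sum_sub_distrib, ← Finset.sum_mul, hp_sum]
    have h1 : ∑ j, p j * p ⬝ᵥ X.col j = p ⬝ᵥ X *ᵥ p := by
      rw [dotProduct_mulVec, dotProduct_comm]; rfl
    have h2 : ∑ j, p j * (X *ᵥ p) j = p ⬝ᵥ X *ᵥ p := rfl
    simp only [h1, h2, col_apply]
    ring
  have hvar_nonneg : 0 ≤ ∑ j, p j * ((Pi.single j 1 - p) ⬝ᵥ X *ᵥ (Pi.single j 1 - p)) :=
    Finset.sum_nonneg fun j _ => mul_nonneg (hp j) (hX.dotProduct_mulVec_nonneg _)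
  linarith

theorem PosSemidef.diag_mul_mul_transpose_le {m : Type*} {X : Matrix n n ℝ} (hX : X.PosSemidef)
    {P : Matrix m n ℝ} (hP : ∀ i j, 0 ≤ P i j) (hP_sum : ∀ i, ∑ j, P i j = 1) :
    (P * X * Pᵀ).diag ≤ P *ᵥ X.diag := fun i => by
  have hquad : (P * X * Pᵀ) i i = P i ⬝ᵥ X *ᵥ P i := by
    rw [dotProduct_mulVec, mul_apply']
    rfl
  rw [diag_apply, hquad]
  exact hX.dotProduct_mulVec_le_sum_mul_diag (hP i) (hP_sum i)

theorem PosSemidef.diagonal_mulVec_diag_sub {m : Type*} [DecidableEq m] {X : Matrix n n ℝ}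
    (hX : X.PosSemidef) {P : Matrix m n ℝ} (hP : ∀ i j, 0 ≤ P i j)
    (hP_sum : ∀ i, ∑ j, P i j = 1) :
    (diagonal (P *ᵥ X.diag) - diagonal (P * X * Pᵀ).diag).PosSemidef := by
  rw [diagonal_sub, posSemidef_diagonal_iff]
  exact fun i => sub_nonneg.mpr (hX.diag_mul_mul_transpose_le hP hP_sum i)

end Matrix

theorem stmt3_general (N : ℕ) (P : Matrix (Fin N) (Fin N) ℝ)
    (hPnonneg : ∀ i j, 0 ≤ P i j) (hProw : ∀ i, ∑ j, P i j = 1)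
    (q : ℝ)
    (X : Matrix (Fin N) (Fin N) ℝ) (hX : X.PosSemidef) :
    (Phi P q X).PosSemidef := by
  have hcongr := hX.mul_mul_conjTranspose_same ((1 - q) • (1 : Matrix (Fin N) (Fin N) ℝ) + q • P)
  rw [conjTranspose_eq_transpose_of_trivial] at hcongr
  exact hcongr.add ((hX.diagonal_mulVec_diag_sub hPnonneg hProw).smul (sq_nonneg q))

/-- `Φ` maps positive semi-definite matrices to positive
semi-definite matrices. -/
theorem stmt3 (N : ℕ) (hN : 1 ≤ N) (P : Matrix (Fin N) (Fin N) ℝ)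
    (hPnonneg : ∀ i j, 0 ≤ P i j) (hProw : ∀ i, ∑ j, P i j = 1)
    (q : ℝ) (hq0 : 0 ≤ q) (hq1 : q ≤ 1)
    (X : Matrix (Fin N) (Fin N) ℝ) (hX : X.PosSemidef) :
    (Phi P q X).PosSemidef :=
  stmt3_general N P hPnonneg hProw q X hX
end

section
/- If X ∈ ℝ^{N×N} has all entries nonnegative, then Φ(X) has all entries nonnegative. -/
open Matrix BigOperators

/-!
Expanding `P_q = (1 - q) I + q P` gives
`Φ(X) = (1 - q)² X + q (1 - q) (P X + X Pᵀ) + q² (P X Pᵀ - Ψ⁻(Ψ(P X Pᵀ)) + Ψ⁻(P Ψ(X)))`: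
the correction term removes exactly the diagonal of the `q²`-part `P X Pᵀ` of `P_q X P_qᵀ`
and puts `P Ψ(X)` in its place. Every summand is then a nonnegative multiple of a matrix
built from `P` and `X` by products, transposes, sums and diagonal surgery, all of which
preserve entrywise nonnegativity.
-/

def EntrywiseNonneg {m n R : Type*} [Zero R] [LE R] (A : Matrix m n R) : Prop :=
  ∀ i j, 0 ≤ A i j

namespace EntrywiseNonneg

variable {l m n R : Type*}

theorem transpose [Zero R] [LE R] {A : Matrix m n R} (hA : EntrywiseNonneg A) :
    EntrywiseNonneg Aᵀ :=
  fun i j => hA j i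

section OrderedSemiring

variable [Semiring R] [PartialOrder R] [IsOrderedRing R]

theorem add {A B : Matrix m n R} (hA : EntrywiseNonneg A) (hB : EntrywiseNonneg B) :
    EntrywiseNonneg (A + B) :=
  fun i j => add_nonneg (hA i j) (hB i j)

theorem smul {A : Matrix m n R} {c : R} (hc : 0 ≤ c) (hA : EntrywiseNonneg A) :
    EntrywiseNonneg (c • A) :=
  fun i j => mul_nonneg hc (hA i j)

theorem mul [Fintype m] {A : Matrix l m R} {B : Matrix m n R} (hA : EntrywiseNonneg A)
    (hB : EntrywiseNonneg B) : EntrywiseNonneg (A * B) :=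
  fun i j => Finset.sum_nonneg fun k _ => mul_nonneg (hA i k) (hB k j)

theorem diagonal_mulVec_diag [Fintype n] [DecidableEq m] {A : Matrix m n R}
    {B : Matrix n n R} (hA : EntrywiseNonneg A) (hB : EntrywiseNonneg B) :
    EntrywiseNonneg (diagonal (A *ᵥ diag B)) := by
  intro i j
  rcases eq_or_ne i j with rfl | hij
  · rw [diagonal_apply_eq]
    exact Finset.sum_nonneg fun k _ => mul_nonneg (hA i k) (hB k k)
  · rw [diagonal_apply_ne _ hij]

end OrderedSemiring

theorem sub_diagonal_diag [AddGroup R] [Preorder R] [DecidableEq n] {A : Matrix n n R}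
    (hA : EntrywiseNonneg A) : EntrywiseNonneg (A - diagonal (diag A)) := by
  intro i j
  rcases eq_or_ne i j with rfl | hij
  · simp
  · simpa [diagonal_apply_ne _ hij] using hA i j

end EntrywiseNonneg

theorem Phi_eq {N : ℕ} (P : Matrix (Fin N) (Fin N) ℝ) (q : ℝ) (X : Matrix (Fin N) (Fin N) ℝ) :
    Phi P q X = (1 - q) ^ 2 • X + (q * (1 - q)) • (P * X + X * Pᵀ)
      + q ^ 2 • (P * X * Pᵀ - diagonal (diag (P * X * Pᵀ)) + diagonal (P *ᵥ diag X)) := by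
  simp only [Phi, transpose_add, transpose_smul, transpose_one, add_mul, mul_add,
    smul_mul_assoc, mul_smul_comm, one_mul, mul_one, Matrix.mul_assoc]
  module

theorem stmt4_general (N : ℕ) (P : Matrix (Fin N) (Fin N) ℝ)
    (hPnonneg : ∀ i j, 0 ≤ P i j)
    (q : ℝ) (hq0 : 0 ≤ q) (hq1 : q ≤ 1)
    (X : Matrix (Fin N) (Fin N) ℝ) (hX : ∀ k l, 0 ≤ X k l) :
    ∀ k l, 0 ≤ Phi P q X k l := by
  have hP : EntrywiseNonneg P := hPnonneg
  have hX : EntrywiseNonneg X := hX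
  have hPXPt : EntrywiseNonneg (P * X * Pᵀ) := (hP.mul hX).mul hP.transpose
  rw [Phi_eq]
  refine ((hX.smul (sq_nonneg _)).add ?cross).add ?quadratic
  case cross =>
    exact ((hP.mul hX).add (hX.mul hP.transpose)).smul (mul_nonneg hq0 (sub_nonneg.2 hq1))
  case quadratic =>
    exact (hPXPt.sub_diagonal_diag.add (hP.diagonal_mulVec_diag hX)).smul (sq_nonneg q)

/-- `Φ` preserves entrywise nonnegativity. -/
theorem stmt4 (N : ℕ) (hN : 1 ≤ N) (P : Matrix (Fin N) (Fin N) ℝ)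
    (hPnonneg : ∀ i j, 0 ≤ P i j) (hProw : ∀ i, ∑ j, P i j = 1)
    (q : ℝ) (hq0 : 0 ≤ q) (hq1 : q ≤ 1)
    (X : Matrix (Fin N) (Fin N) ℝ) (hX : ∀ k l, 0 ≤ X k l) :
    ∀ k l, 0 ≤ Phi P q X k l :=
  stmt4_general N P hPnonneg q hq0 hq1 X hX
end

section
/- If the row-stochastic matrix P is symmetric and X ∈ ℝ^{N×N} is symmetric positive semi-definite, then Tr(Φ(X)) ≤ Tr(X). -/
/-! Expanding `P_q X P_qᵀ`, the `q²`-correction replaces `Tr(P X Pᵀ)` by `Tr(P·Ψ(X)) = Tr X`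
(column sums of `P` are `1`), so `Tr Φ(X) = Tr X − 2q(1−q)(Tr X − Tr(P X))`. Since `X` is positive
semidefinite, `X i j ≤ (X i i + X j j)/2`, and averaging this with the doubly stochastic weights
`P j i` gives `Tr(P X) ≤ Tr X`. -/

open Matrix BigOperators

namespace Matrix

variable {n : Type*} [Fintype n] [DecidableEq n]

lemma PosSemidef.apply_le_half_add {X : Matrix n n ℝ} (hX : X.PosSemidef) (i j : n) :
    X i j ≤ (X i i + X j j) / 2 := by
  have h := hX.dotProduct_mulVec_nonneg (Pi.single i 1 - Pi.single j 1)
  have hji : X j i = X i j := (isHermitian_iff_isSymm.1 hX.1).apply i j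
  simp only [dotProduct, Pi.star_apply, Pi.sub_apply, Pi.single_apply, star_trivial, mulVec, mul_sub,
    mul_ite, mul_one, mul_zero, Finset.sum_sub_distrib, Finset.sum_ite_eq', Finset.mem_univ,
    ↓reduceIte, sub_mul, ite_mul, one_mul, zero_mul, sub_nonneg, tsub_le_iff_right] at h
  linarith

lemma trace_mul_le_trace_of_mem_doublyStochastic {P X : Matrix n n ℝ}
    (hP : P ∈ doublyStochastic ℝ n) (hX : X.PosSemidef) : (P * X).trace ≤ X.trace := by
  calc (P * X).trace = ∑ i, ∑ j, P i j * X j i := by simp [trace, mul_apply]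
    _ ≤ ∑ i, ∑ j, P i j * ((X i i + X j j) / 2) := by
      gcongr with i _ j _
      · exact nonneg_of_mem_doublyStochastic hP
      · rw [add_comm]
        exact hX.apply_le_half_add j i
    _ = (∑ i, (∑ j, P i j) * X i i + ∑ j, (∑ i, P i j) * X j j) / 2 := by
      simp only [Finset.sum_mul, mul_add, mul_div_assoc', Finset.sum_add_distrib, ← Finset.sum_div]
      rw [Finset.sum_comm (f := fun i j => P i j * X j j)]
    _ = X.trace := by
      simp [sum_row_of_mem_doublyStochastic hP, sum_col_of_mem_doublyStochastic hP, trace]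

lemma mem_doublyStochastic_of_transpose_eq {P : Matrix n n ℝ} (hPsymm : Pᵀ = P)
    (hPnonneg : ∀ i j, 0 ≤ P i j) (hProw : ∀ i, ∑ j, P i j = 1) : P ∈ doublyStochastic ℝ n := by
  refine mem_doublyStochastic_iff_sum.2 ⟨hPnonneg, hProw, fun j => ?_⟩
  calc ∑ i, P i j = ∑ i, Pᵀ j i := rfl
    _ = 1 := by rw [hPsymm, hProw]

end Matrix

lemma trace_Phi {N : ℕ} {P X : Matrix (Fin N) (Fin N) ℝ} (hP : P ∈ colStochastic ℝ (Fin N))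
    (hX : X.IsSymm) (q : ℝ) :
    (Phi P q X).trace = X.trace - 2 * q * (1 - q) * (X.trace - (P * X).trace) := by
  have hsum : ∑ i, (P *ᵥ X.diag) i = X.trace := sum_mulVec_of_mem_colStochastic hP
  have hXP : (X * Pᵀ).trace = (P * X).trace := by
    rw [← trace_transpose, transpose_mul, transpose_transpose, hX.eq]
  simp only [Phi, transpose_add, transpose_smul, transpose_one, add_mul, mul_add, smul_mul_assoc,
    mul_smul_comm, one_mul, mul_one, trace_add, trace_smul, trace_sub, trace_diagonal, hsum, hXP,
    smul_eq_mul]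
  rw [show ∑ i, (P * X * Pᵀ).diag i = (P * X * Pᵀ).trace from rfl]
  ring

theorem stmt6_general (N : ℕ) (P : Matrix (Fin N) (Fin N) ℝ)
    (hPnonneg : ∀ i j, 0 ≤ P i j) (hProw : ∀ i, ∑ j, P i j = 1)
    (hPsymm : Pᵀ = P)
    (q : ℝ) (hq0 : 0 ≤ q) (hq1 : q ≤ 1)
    (X : Matrix (Fin N) (Fin N) ℝ) (hX : X.PosSemidef) :
    (Phi P q X).trace ≤ X.trace := by
  have hP := mem_doublyStochastic_of_transpose_eq hPsymm hPnonneg hProw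
  have hcol := (mem_doublyStochastic_iff_mem_rowStochastic_and_mem_colStochastic.1 hP).2
  rw [trace_Phi hcol (isHermitian_iff_isSymm.1 hX.1)]
  have hgap : 0 ≤ X.trace - (P * X).trace :=
    sub_nonneg.2 (trace_mul_le_trace_of_mem_doublyStochastic hP hX)
  have hweight : 0 ≤ 2 * q * (1 - q) := mul_nonneg (mul_nonneg zero_le_two hq0) (sub_nonneg.2 hq1)
  linarith [mul_nonneg hweight hgap]

/-- If `P` is symmetric and `X` is positive semi-definite, then
`Tr(Φ(X)) ≤ Tr(X)`. -/
theorem stmt6 (N : ℕ) (hN : 1 ≤ N) (P : Matrix (Fin N) (Fin N) ℝ)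
    (hPnonneg : ∀ i j, 0 ≤ P i j) (hProw : ∀ i, ∑ j, P i j = 1)
    (hPsymm : Pᵀ = P)
    (q : ℝ) (hq0 : 0 ≤ q) (hq1 : q ≤ 1)
    (X : Matrix (Fin N) (Fin N) ℝ) (hX : X.PosSemidef) :
    (Phi P q X).trace ≤ X.trace :=
  stmt6_general N P hPnonneg hProw hPsymm q hq0 hq1 X hX
end

section
/- If X ∈ ℝ^{N×N} satisfies X𝟙 = 0, then Φ*(X)𝟙 = 0, where 𝟙 ∈ ℝ^N is the all-ones vector. -/
open Matrix BigOperators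

/-- The map `Φ*(Y) = P_qᵀ Y P_q + q²(Ψ⁻(Pᵀ·Ψ(Y)) − Pᵀ Ψ⁻(Ψ(Y)) P)`,
where `P_q = (1−q)I + qP`. -/
noncomputable def PhiStar {N : ℕ} (P : Matrix (Fin N) (Fin N) ℝ) (q : ℝ)
    (Y : Matrix (Fin N) (Fin N) ℝ) : Matrix (Fin N) (Fin N) ℝ :=
  ((1 - q) • (1 : Matrix (Fin N) (Fin N) ℝ) + q • P)ᵀ * Y *
      ((1 - q) • (1 : Matrix (Fin N) (Fin N) ℝ) + q • P)
    + q ^ 2 •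
        (Matrix.diagonal (Pᵀ *ᵥ Matrix.diag Y)
          - Pᵀ * Matrix.diagonal (Matrix.diag Y) * P)

/-- If `X 𝟙 = 0` then `Φ*(X) 𝟙 = 0`. -/
theorem stmt8 (N : ℕ) (hN : 1 ≤ N) (P : Matrix (Fin N) (Fin N) ℝ)
    (hPnonneg : ∀ i j, 0 ≤ P i j) (hProw : ∀ i, ∑ j, P i j = 1)
    (q : ℝ)
    (X : Matrix (Fin N) (Fin N) ℝ) (hX : X *ᵥ (fun _ => (1 : ℝ)) = 0) :
    PhiStar P q X *ᵥ (fun _ => (1 : ℝ)) = 0 := by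
  have hP1 : P *ᵥ (fun _ => (1 : ℝ)) = (fun _ => (1 : ℝ)) := by
    funext i; simp [Matrix.mulVec, dotProduct, hProw i]
  have hQ : ((1 - q) • (1 : Matrix (Fin N) (Fin N) ℝ) + q • P) *ᵥ (fun _ => (1 : ℝ))
      = (fun _ => (1 : ℝ)) := by
    rw [Matrix.add_mulVec, Matrix.smul_mulVec, Matrix.smul_mulVec,
      Matrix.one_mulVec, hP1]
    funext i; simp
  have hdiag : Matrix.diagonal (Pᵀ *ᵥ Matrix.diag X) *ᵥ (fun _ => (1 : ℝ))
      = Pᵀ *ᵥ Matrix.diag X := by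
    funext i; simp [Matrix.mulVec_diagonal]
  have hdiag2 : Matrix.diagonal (Matrix.diag X) *ᵥ (fun _ => (1 : ℝ)) = Matrix.diag X := by
    funext i; simp [Matrix.mulVec_diagonal]
  unfold PhiStar
  rw [Matrix.add_mulVec, ← Matrix.mulVec_mulVec, hQ, ← Matrix.mulVec_mulVec, hX,
    Matrix.mulVec_zero, Matrix.smul_mulVec, Matrix.sub_mulVec, hdiag,
    ← Matrix.mulVec_mulVec, ← Matrix.mulVec_mulVec, hP1, hdiag2]
  simp
end

section
/- Let v ∈ ℝ^N with Σ_i v_i = 0, and let X ∈ ℝ^{N×N} be symmetric with 0 ⪯ X ⪯ I (positive semi-definite and I − X positive semi-definite) and XJ = 0. Then vᵀ Φ*(X) v ≤ vᵀ ( P_qᵀP_q + q²(Γ − PᵀP) ) v, where Γ is the diagonal matrix with Γ_{ii} = Σ_j p_{ji}. -/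
open Matrix BigOperators

/-!
`Φ*` is linear and maps positive semidefinite matrices to positive semidefinite ones: its first
term is a congruence `P_qᵀ Y P_q`, and the quadratic form of its second term is `q²` times the
`diag Y`-weighted sum of the row variances `∑ⱼ p_ij v_j² − (∑ⱼ p_ij v_j)²`, which are nonnegative
by Jensen since each row of `P` is a probability vector. Hence `X ⪯ I` gives `Φ*(X) ⪯ Φ*(I)`, and
`Φ*(I)` is the matrix on the right.
-/

section RowStochastic

variable {m n : Type*} [Fintype n]

lemma sq_mulVec_le_mulVec_sq {P : Matrix m n ℝ} {i : m} (hP : ∀ j, 0 ≤ P i j)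
    (hP1 : ∑ j, P i j = 1) (x : n → ℝ) : (P *ᵥ x) i ^ 2 ≤ (P *ᵥ x ^ 2) i := by
  simpa [mulVec, dotProduct] using
    (even_two.convexOn_pow (𝕜 := ℝ)).map_sum_le (t := Finset.univ) (p := x)
      (fun j _ => hP j) hP1 (fun j _ => Set.mem_univ _)

variable [DecidableEq n]

lemma dotProduct_diagonal_mulVec_self {R : Type*} [CommSemiring R] (w x : n → R) :
    x ⬝ᵥ (diagonal w *ᵥ x) = w ⬝ᵥ x ^ 2 := by
  simp only [dotProduct, mulVec_diagonal, Pi.pow_apply]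
  exact Finset.sum_congr rfl fun i _ => by ring

theorem posSemidef_diagonal_mulVec_sub_transpose_mul_diagonal_mul {P : Matrix n n ℝ}
    (hP : ∀ i j, 0 ≤ P i j) (hP1 : ∀ i, ∑ j, P i j = 1) {d : n → ℝ} (hd : 0 ≤ d) :
    (diagonal (Pᵀ *ᵥ d) - Pᵀ * diagonal d * P).PosSemidef := by
  refine .of_dotProduct_mulVec_nonneg ?_ fun x => ?_
  · simpa [conjTranspose_eq_transpose_of_trivial] using
      (isHermitian_diagonal (Pᵀ *ᵥ d)).sub (isHermitian_conjTranspose_mul_mul P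
        (isHermitian_diagonal d))
  · have hform : x ⬝ᵥ ((diagonal (Pᵀ *ᵥ d) - Pᵀ * diagonal d * P) *ᵥ x)
        = d ⬝ᵥ (P *ᵥ x ^ 2 - (P *ᵥ x) ^ 2) := by
      have hPt (y : n → ℝ) : (Pᵀ *ᵥ d) ⬝ᵥ y = d ⬝ᵥ (P *ᵥ y) := by
        rw [dotProduct_comm, dotProduct_mulVec, vecMul_transpose, dotProduct_comm]
      rw [sub_mulVec, dotProduct_sub, dotProduct_diagonal_mulVec_self, hPt, ← mulVec_mulVec,
        ← mulVec_mulVec, dotProduct_mulVec x Pᵀ, vecMul_transpose, dotProduct_diagonal_mulVec_self,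
        dotProduct_sub]
    rw [star_trivial, hform]
    exact dotProduct_nonneg_of_nonneg hd fun i =>
      sub_nonneg.2 (sq_mulVec_le_mulVec_sq (hP i) (hP1 i) x)

end RowStochastic

section PhiStar

variable {N : ℕ} (P : Matrix (Fin N) (Fin N) ℝ) (q : ℝ)

lemma phiStar_sub (A B : Matrix (Fin N) (Fin N) ℝ) :
    PhiStar P q (A - B) = PhiStar P q A - PhiStar P q B := by
  have diagonal_sub' (d₁ d₂ : Fin N → ℝ) : diagonal (d₁ - d₂) = diagonal d₁ - diagonal d₂ :=
    (diagonal_sub d₁ d₂).symm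
  simp only [PhiStar, diag_sub, mulVec_sub, diagonal_sub', mul_sub, sub_mul, smul_sub]
  abel

lemma phiStar_one :
    PhiStar P q 1 = ((1 - q) • (1 : Matrix (Fin N) (Fin N) ℝ) + q • P)ᵀ *
          ((1 - q) • (1 : Matrix (Fin N) (Fin N) ℝ) + q • P)
        + q ^ 2 • (diagonal (fun i => ∑ j, P j i) - Pᵀ * P) := by
  have hcol : Pᵀ *ᵥ diag 1 = fun i => ∑ j, P j i := by
    ext i
    simp [mulVec, dotProduct]
  rw [PhiStar, Matrix.mul_one, hcol, diag_one, diagonal_one', Matrix.mul_one]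

variable {P}

lemma posSemidef_phiStar (hP : ∀ i j, 0 ≤ P i j) (hP1 : ∀ i, ∑ j, P i j = 1)
    {Y : Matrix (Fin N) (Fin N) ℝ} (hY : Y.PosSemidef) : (PhiStar P q Y).PosSemidef := by
  refine .add ?_ (.smul (posSemidef_diagonal_mulVec_sub_transpose_mul_diagonal_mul hP hP1
    fun _ => hY.diag_nonneg) (sq_nonneg q))
  simpa [conjTranspose_eq_transpose_of_trivial] using hY.conjTranspose_mul_mul_same
    ((1 - q) • (1 : Matrix (Fin N) (Fin N) ℝ) + q • P)

end PhiStar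

theorem stmt10_general (N : ℕ) (P : Matrix (Fin N) (Fin N) ℝ)
    (hPnonneg : ∀ i j, 0 ≤ P i j) (hProw : ∀ i, ∑ j, P i j = 1)
    (q : ℝ) (v : Fin N → ℝ) (X : Matrix (Fin N) (Fin N) ℝ)
    (hXle : ((1 : Matrix (Fin N) (Fin N) ℝ) - X).PosSemidef) :
    v ⬝ᵥ (PhiStar P q X *ᵥ v)
      ≤ v ⬝ᵥ ((((1 - q) • (1 : Matrix (Fin N) (Fin N) ℝ) + q • P)ᵀ *
            ((1 - q) • (1 : Matrix (Fin N) (Fin N) ℝ) + q • P)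
          + q ^ 2 • (Matrix.diagonal (fun i => ∑ j, P j i) - Pᵀ * P)) *ᵥ v) := by
  have h := (posSemidef_phiStar q hPnonneg hProw hXle).dotProduct_mulVec_nonneg v
  rwa [phiStar_sub, phiStar_one, sub_mulVec, dotProduct_sub, star_trivial, sub_nonneg] at h

/-- For `v ⊥ 𝟙` and symmetric `X` with `0 ⪯ X ⪯ I` and `XJ = 0`,
`vᵀ Φ*(X) v ≤ vᵀ (P_qᵀP_q + q²(Γ − PᵀP)) v`, where `Γᵢᵢ = ∑ⱼ p_{ji}`. -/
theorem stmt10 (N : ℕ) (hN : 1 ≤ N) (P : Matrix (Fin N) (Fin N) ℝ)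
    (hPnonneg : ∀ i j, 0 ≤ P i j) (hProw : ∀ i, ∑ j, P i j = 1)
    (q : ℝ) (hq0 : 0 ≤ q) (hq1 : q ≤ 1)
    (v : Fin N → ℝ) (hv : ∑ i, v i = 0)
    (X : Matrix (Fin N) (Fin N) ℝ) (hXsymm : Xᵀ = X)
    (hXpos : X.PosSemidef) (hXle : ((1 : Matrix (Fin N) (Fin N) ℝ) - X).PosSemidef)
    (hXJ : X * (Matrix.of fun _ _ => (N : ℝ)⁻¹) = 0) :
    v ⬝ᵥ (PhiStar P q X *ᵥ v)
      ≤ v ⬝ᵥ ((((1 - q) • (1 : Matrix (Fin N) (Fin N) ℝ) + q • P)ᵀ *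
            ((1 - q) • (1 : Matrix (Fin N) (Fin N) ℝ) + q • P)
          + q ^ 2 • (Matrix.diagonal (fun i => ∑ j, P j i) - Pᵀ * P)) *ᵥ v) :=
  stmt10_general N P hPnonneg hProw q v X hXle
end

section
/- Suppose additionally that P is symmetric and let λ₂ denote its second-largest eigenvalue (i.e., vᵀPv ≤ λ₂‖v‖² for every v with Σ_i v_i = 0, with equality attained for some such v ≠ 0). Then for every integer t ≥ 0: Tr( (Φ*)^t(I−J) ) ≤ N · ( (1−q)² + 2q(1−q)λ₂ + q² )^t. -/
open Matrix BigOperators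

/-!
`Φ*` is linear and preserves positive semidefiniteness: its `q²` part is, row by row of `P`,
a variance, hence nonnegative by Jensen. For `C = I - J` and `μ = (1-q)² + 2q(1-q)λ₂ + q²` one
computes `μ C - Φ*(C) = 2q(1-q) (λ₂ C - (P - J)) + (q²/N) (I - P²)`; the first term is PSD by
the spectral bound on `𝟙^⊥`, the second because `P` is a contraction. By induction
`μᵗ C - (Φ*)ᵗ C` is PSD, and taking traces gives `Tr (Φ*)ᵗ C ≤ μᵗ (N - 1)`. Finally `μ ≥ 0`,
since the trace of `λ₂ C - (P - J)` forces `λ₂ ≥ -1/(N-1)`.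
-/

section General

variable {m n : Type*} [Fintype m] [Fintype n]

lemma posSemidef_of_transpose_eq_of_nonneg {M : Matrix n n ℝ} (hM : Mᵀ = M)
    (h : ∀ x, 0 ≤ x ⬝ᵥ (M *ᵥ x)) : M.PosSemidef :=
  .of_dotProduct_mulVec_nonneg (by rwa [IsHermitian, conjTranspose_eq_transpose_of_trivial])
    (by simpa using h)

lemma sq_sum_mul_le_sum_mul_sq {p : n → ℝ} (hp : ∀ i, 0 ≤ p i) (hp1 : ∑ i, p i = 1)
    (x : n → ℝ) : (∑ i, p i * x i) ^ 2 ≤ ∑ i, p i * x i ^ 2 := by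
  simpa using (even_two.convexOn_pow : ConvexOn ℝ Set.univ (· ^ 2)).map_sum_le
    (fun i _ => hp i) hp1 (fun i _ => Set.mem_univ (x i))

lemma posSemidef_diagonal_mulVec_sub [DecidableEq m] [DecidableEq n] {P : Matrix m n ℝ}
    (hP : ∀ i j, 0 ≤ P i j) (hProw : ∀ i, ∑ j, P i j = 1) {ψ : m → ℝ} (hψ : ∀ i, 0 ≤ ψ i) :
    (diagonal (Pᵀ *ᵥ ψ) - Pᵀ * diagonal ψ * P).PosSemidef := by
  refine posSemidef_of_transpose_eq_of_nonneg ?_ fun x => ?_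
  · simp [transpose_sub, Matrix.mul_assoc]
  have hdiag : x ⬝ᵥ (diagonal (Pᵀ *ᵥ ψ) *ᵥ x) = ∑ i, ψ i * ∑ j, P i j * x j ^ 2 := by
    simp only [dotProduct, mulVec_diagonal]
    simp only [mulVec, dotProduct, transpose_apply, Finset.mul_sum, Finset.sum_mul]
    rw [Finset.sum_comm]
    exact Fintype.sum_congr _ _ fun i => Fintype.sum_congr _ _ fun j => by ring
  have hconj : x ⬝ᵥ ((Pᵀ * diagonal ψ * P) *ᵥ x) = ∑ i, ψ i * (∑ j, P i j * x j) ^ 2 := by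
    rw [← mulVec_mulVec, ← mulVec_mulVec, dotProduct_mulVec, vecMul_transpose]
    simp only [dotProduct, mulVec_diagonal]
    exact Fintype.sum_congr _ _ fun i => by simp only [mulVec, dotProduct]; ring
  rw [sub_mulVec, dotProduct_sub, hdiag, hconj, ← Finset.sum_sub_distrib]
  exact Finset.sum_nonneg fun i _ => by
    rw [← mul_sub]
    exact mul_nonneg (hψ i) (sub_nonneg.2 (sq_sum_mul_le_sum_mul_sq (hP i) (hProw i) x))

omit [Fintype n] in
lemma posSemidef_pow_smul_sub_iterate (Φ : Matrix n n ℝ →ₗ[ℝ] Matrix n n ℝ)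
    (hΦ : ∀ X, X.PosSemidef → (Φ X).PosSemidef) {μ : ℝ} (hμ : 0 ≤ μ) {E : Matrix n n ℝ}
    (hE : (μ • E - Φ E).PosSemidef) (t : ℕ) : (μ ^ t • E - Φ^[t] E).PosSemidef := by
  induction t with
  | zero => simpa using PosSemidef.zero
  | succ t ih =>
    have h : μ ^ (t + 1) • E - Φ^[t + 1] E = μ ^ t • (μ • E - Φ E) + Φ (μ ^ t • E - Φ^[t] E) := by
      rw [Function.iterate_succ_apply', map_sub, map_smul, pow_succ]; module
    rw [h]
    exact (hE.smul (pow_nonneg hμ t)).add (hΦ _ ih)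

end General

section Stochastic

variable {N : ℕ}

noncomputable def meanMatrix (N : ℕ) : Matrix (Fin N) (Fin N) ℝ := of fun _ _ => (N : ℝ)⁻¹

lemma transpose_meanMatrix : (meanMatrix N)ᵀ = meanMatrix N := rfl

lemma meanMatrix_mul_self (hN : N ≠ 0) : meanMatrix N * meanMatrix N = meanMatrix N := by
  ext i j
  simp only [meanMatrix, mul_apply, of_apply, Finset.sum_const, Finset.card_univ,
    Fintype.card_fin, nsmul_eq_mul]
  field_simp

lemma trace_meanMatrix (hN : N ≠ 0) : (meanMatrix N).trace = 1 := by
  simp only [trace, meanMatrix, diag_apply, of_apply, Finset.sum_const, Finset.card_univ,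
    Fintype.card_fin, nsmul_eq_mul]
  field_simp

lemma diag_one_sub_meanMatrix : (1 - meanMatrix N).diag = fun _ => 1 - (N : ℝ)⁻¹ := by
  ext i
  simp [meanMatrix]

lemma sum_one_sub_meanMatrix_mulVec (hN : N ≠ 0) (x : Fin N → ℝ) :
    ∑ i, ((1 - meanMatrix N) *ᵥ x) i = 0 := by
  have hJ : ∀ i, (meanMatrix N *ᵥ x) i = (N : ℝ)⁻¹ * ∑ j, x j := fun i => by
    simp [meanMatrix, mulVec, dotProduct, Finset.mul_sum]
  simp only [sub_mulVec, one_mulVec, Pi.sub_apply, Finset.sum_sub_distrib, hJ,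
    Finset.sum_const, Finset.card_univ, Fintype.card_fin, nsmul_eq_mul]
  field_simp
  ring

variable {P : Matrix (Fin N) (Fin N) ℝ}

lemma mulVec_const_of_sum_row_eq_one (hProw : ∀ i, ∑ j, P i j = 1) (c : ℝ) :
    P *ᵥ (fun _ => c) = fun _ => c := by
  ext i
  simp [mulVec, dotProduct, ← Finset.sum_mul, hProw]

lemma mul_meanMatrix (hProw : ∀ i, ∑ j, P i j = 1) : P * meanMatrix N = meanMatrix N := by
  ext i j
  simp [meanMatrix, mul_apply, ← Finset.sum_mul, hProw]

lemma meanMatrix_mul (hProw : ∀ i, ∑ j, P i j = 1) (hPsymm : Pᵀ = P) :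
    meanMatrix N * P = meanMatrix N := by
  simpa [hPsymm, transpose_meanMatrix] using
    congrArg transpose (mul_meanMatrix (N := N) hProw)

lemma posSemidef_one_sub_mul_self (hP : ∀ i j, 0 ≤ P i j) (hProw : ∀ i, ∑ j, P i j = 1)
    (hPsymm : Pᵀ = P) : (1 - P * P).PosSemidef := by
  simpa [hPsymm, mulVec_const_of_sum_row_eq_one hProw] using
    posSemidef_diagonal_mulVec_sub hP hProw (ψ := fun _ => 1) fun _ => zero_le_one

lemma posSemidef_smul_one_sub_meanMatrix_sub (hN : N ≠ 0) (hProw : ∀ i, ∑ j, P i j = 1)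
    (hPsymm : Pᵀ = P) {lam : ℝ}
    (hlam : ∀ v : Fin N → ℝ, ∑ i, v i = 0 → v ⬝ᵥ (P *ᵥ v) ≤ lam * ∑ i, v i ^ 2) :
    (lam • (1 - meanMatrix N) - (P - meanMatrix N)).PosSemidef := by
  set C : Matrix (Fin N) (Fin N) ℝ := 1 - meanMatrix N
  have hC : lam • C - (P - meanMatrix N) = Cᵀ * (lam • 1 - P) * C := by
    simp only [C, transpose_sub, transpose_one, transpose_meanMatrix, Matrix.sub_mul,
      Matrix.mul_sub, Matrix.one_mul, Matrix.mul_one, smul_mul_assoc, Matrix.mul_smul,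
      mul_meanMatrix hProw, meanMatrix_mul hProw hPsymm, meanMatrix_mul_self hN]
    module
  refine posSemidef_of_transpose_eq_of_nonneg (by simp [C, hPsymm, transpose_meanMatrix])
    fun x => ?_
  have hw := hlam (C *ᵥ x) (sum_one_sub_meanMatrix_mulVec hN x)
  rw [hC, ← mulVec_mulVec, ← mulVec_mulVec, dotProduct_mulVec, vecMul_transpose]
  generalize C *ᵥ x = w at hw ⊢
  rw [sub_mulVec, dotProduct_sub, smul_mulVec, one_mulVec, dotProduct_smul, smul_eq_mul,
    sub_nonneg]
  simpa [dotProduct, sq] using hw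

lemma PhiStar_add (q : ℝ) (X Y : Matrix (Fin N) (Fin N) ℝ) :
    PhiStar P q (X + Y) = PhiStar P q X + PhiStar P q Y := by
  have hdiag (u v : Fin N → ℝ) : diagonal (u + v) = diagonal u + diagonal v :=
    (diagonal_add u v).symm
  unfold PhiStar
  rw [diag_add, mulVec_add, hdiag, hdiag]
  simp only [Matrix.mul_add, Matrix.add_mul]
  module

lemma PhiStar_smul (q c : ℝ) (X : Matrix (Fin N) (Fin N) ℝ) :
    PhiStar P q (c • X) = c • PhiStar P q X := by
  simp only [PhiStar, diag_smul, mulVec_smul, diagonal_smul, mul_smul_comm, smul_mul_assoc]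
  module

noncomputable def PhiStarLinearMap (P : Matrix (Fin N) (Fin N) ℝ) (q : ℝ) :
    Matrix (Fin N) (Fin N) ℝ →ₗ[ℝ] Matrix (Fin N) (Fin N) ℝ where
  toFun := PhiStar P q
  map_add' := PhiStar_add q
  map_smul' := PhiStar_smul q

lemma posSemidef_PhiStar (hP : ∀ i j, 0 ≤ P i j) (hProw : ∀ i, ∑ j, P i j = 1) {q : ℝ}
    {X : Matrix (Fin N) (Fin N) ℝ} (hX : X.PosSemidef) : (PhiStar P q X).PosSemidef := by
  refine .add ?_ ((posSemidef_diagonal_mulVec_sub hP hProw fun _ => hX.diag_nonneg).smul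
    (sq_nonneg q))
  simpa only [conjTranspose_eq_transpose_of_trivial] using
    hX.conjTranspose_mul_mul_same ((1 - q) • 1 + q • P)

lemma PhiStar_one_sub_meanMatrix (hProw : ∀ i, ∑ j, P i j = 1) (hPsymm : Pᵀ = P) (q : ℝ) :
    PhiStar P q (1 - meanMatrix N)
      = ((1 - q) • 1 + q • P) * (1 - meanMatrix N) * ((1 - q) • 1 + q • P)
        + (q ^ 2 * (1 - (N : ℝ)⁻¹)) • (1 - P * P) := by
  have hPq : ((1 - q) • (1 : Matrix (Fin N) (Fin N) ℝ) + q • P)ᵀ = (1 - q) • 1 + q • P := by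
    simp [hPsymm]
  rw [PhiStar, hPq, diag_one_sub_meanMatrix, hPsymm, mulVec_const_of_sum_row_eq_one hProw,
    ← smul_one_eq_diagonal]
  simp only [Matrix.mul_smul, Matrix.mul_one, smul_mul_assoc, smul_sub, smul_smul]

lemma posSemidef_smul_one_sub_meanMatrix_sub_PhiStar (hN : N ≠ 0) (hP : ∀ i j, 0 ≤ P i j)
    (hProw : ∀ i, ∑ j, P i j = 1) (hPsymm : Pᵀ = P) {q : ℝ} (hq0 : 0 ≤ q) (hq1 : q ≤ 1)
    {lam : ℝ} (hlam : ∀ v : Fin N → ℝ, ∑ i, v i = 0 → v ⬝ᵥ (P *ᵥ v) ≤ lam * ∑ i, v i ^ 2) :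
    (((1 - q) ^ 2 + 2 * q * (1 - q) * lam + q ^ 2) • (1 - meanMatrix N)
      - PhiStar P q (1 - meanMatrix N)).PosSemidef := by
  have hgap : ((1 - q) ^ 2 + 2 * q * (1 - q) * lam + q ^ 2) • (1 - meanMatrix N)
        - PhiStar P q (1 - meanMatrix N)
      = (2 * q * (1 - q)) • (lam • (1 - meanMatrix N) - (P - meanMatrix N))
        + (q ^ 2 * (N : ℝ)⁻¹) • (1 - P * P) := by
    rw [PhiStar_one_sub_meanMatrix hProw hPsymm]
    simp only [Matrix.mul_sub, Matrix.sub_mul, Matrix.mul_add, Matrix.add_mul, smul_mul_assoc,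
      mul_smul_comm, Matrix.mul_one, Matrix.one_mul, mul_meanMatrix hProw,
      meanMatrix_mul hProw hPsymm]
    module
  rw [hgap]
  exact ((posSemidef_smul_one_sub_meanMatrix_sub hN hProw hPsymm hlam).smul
    (by nlinarith)).add ((posSemidef_one_sub_mul_self hP hProw hPsymm).smul (by positivity))

lemma neg_one_le_of_posSemidef_smul_one_sub_meanMatrix_sub (hN : 2 ≤ N)
    (hP : ∀ i j, 0 ≤ P i j) {lam : ℝ}
    (h : (lam • (1 - meanMatrix N) - (P - meanMatrix N)).PosSemidef) : -1 ≤ lam := by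
  have htr := h.trace_nonneg
  have hP1 : 0 ≤ P.trace := Finset.sum_nonneg fun i _ => hP i i
  have hN' : (2 : ℝ) ≤ N := by exact_mod_cast hN
  simp only [trace_sub, trace_smul, trace_one, trace_meanMatrix (by omega : N ≠ 0),
    Fintype.card_fin, smul_eq_mul] at htr
  nlinarith

end Stochastic

theorem stmt12_general (N : ℕ) (hN : 2 ≤ N) (P : Matrix (Fin N) (Fin N) ℝ)
    (hPnonneg : ∀ i j, 0 ≤ P i j) (hProw : ∀ i, ∑ j, P i j = 1)
    (hPsymm : Pᵀ = P)
    (q : ℝ) (hq0 : 0 ≤ q) (hq1 : q ≤ 1)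
    (lam2 : ℝ)
    (hlam2_ub : ∀ v : Fin N → ℝ, ∑ i, v i = 0 →
      v ⬝ᵥ (P *ᵥ v) ≤ lam2 * ∑ i, v i ^ 2)
    (t : ℕ) :
    ((PhiStar P q)^[t]
        ((1 : Matrix (Fin N) (Fin N) ℝ) - Matrix.of fun _ _ => (N : ℝ)⁻¹)).trace
      ≤ (N : ℝ) * ((1 - q) ^ 2 + 2 * q * (1 - q) * lam2 + q ^ 2) ^ t := by
  have hN0 : N ≠ 0 := by omega
  have hlam : -1 ≤ lam2 := neg_one_le_of_posSemidef_smul_one_sub_meanMatrix_sub hN hPnonneg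
    (posSemidef_smul_one_sub_meanMatrix_sub hN0 hProw hPsymm hlam2_ub)
  set μ := (1 - q) ^ 2 + 2 * q * (1 - q) * lam2 + q ^ 2
  have hμ : 0 ≤ μ := by
    nlinarith [mul_nonneg (mul_nonneg hq0 (sub_nonneg.2 hq1)) (neg_le_iff_add_nonneg.1 hlam),
      sq_nonneg (1 - 2 * q)]
  have hgap := posSemidef_smul_one_sub_meanMatrix_sub_PhiStar hN0 hPnonneg hProw hPsymm hq0 hq1
    hlam2_ub
  have htr := (posSemidef_pow_smul_sub_iterate (PhiStarLinearMap P q)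
    (fun _ => posSemidef_PhiStar hPnonneg hProw) hμ hgap t).trace_nonneg
  rw [trace_sub, trace_smul, trace_sub, trace_one, trace_meanMatrix hN0, Fintype.card_fin,
    smul_eq_mul, sub_nonneg] at htr
  calc _ ≤ μ ^ t * (N - 1) := htr
    _ ≤ N * μ ^ t := by nlinarith [pow_nonneg hμ t]

/-- If `P` is symmetric with second-largest eigenvalue `λ₂`, then
`Tr((Φ*)ᵗ(I−J)) ≤ N ((1−q)² + 2q(1−q)λ₂ + q²)ᵗ`. -/
theorem stmt12 (N : ℕ) (hN : 2 ≤ N) (P : Matrix (Fin N) (Fin N) ℝ)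
    (hPnonneg : ∀ i j, 0 ≤ P i j) (hProw : ∀ i, ∑ j, P i j = 1)
    (hPsymm : Pᵀ = P)
    (q : ℝ) (hq0 : 0 ≤ q) (hq1 : q ≤ 1)
    (lam2 : ℝ)
    (hlam2_ub : ∀ v : Fin N → ℝ, ∑ i, v i = 0 →
      v ⬝ᵥ (P *ᵥ v) ≤ lam2 * ∑ i, v i ^ 2)
    (hlam2_attained : ∃ v : Fin N → ℝ, v ≠ 0 ∧ ∑ i, v i = 0 ∧
      v ⬝ᵥ (P *ᵥ v) = lam2 * ∑ i, v i ^ 2)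
    (t : ℕ) :
    ((PhiStar P q)^[t]
        ((1 : Matrix (Fin N) (Fin N) ℝ) - Matrix.of fun _ _ => (N : ℝ)⁻¹)).trace
      ≤ (N : ℝ) * ((1 - q) ^ 2 + 2 * q * (1 - q) * lam2 + q ^ 2) ^ t :=
  stmt12_general N hN P hPnonneg hProw hPsymm q hq0 hq1 lam2 hlam2_ub t
end

section
/- For every integer t ≥ 0, the expected squared Frobenius norm of (I−J)H(t) equals the trace of the t-fold iterate of Φ* applied to I−J: E[ ‖(I−J)H(t)‖_F² ] = Tr( (Φ*)^t(I−J) ). -/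
/-!
Write `H = K(1) H'` with `H'` the product of the remaining `t` factors. Averaging over the first
map alone turns `Hᵀ Y H` into `H'ᵀ (E[K(1)ᵀ Y K(1)]) H'`, and `E[Kᵀ Y K] = Φ*(Y)` is a
second-moment computation: the rows of the random map are independent, and a single row hits
columns `a` and `b` simultaneously only when `a = b`. Iterating gives `E[Hᵀ Y H] = (Φ*)ᵗ(Y)`.
Finally `I − J` is a symmetric idempotent, so `‖(I − J)H‖_F² = Tr(Hᵀ (I − J) H)`, and the
expectation commutes with the trace.
-/

open Matrix BigOperators

/-- The random update matrix `K(g) = (1−q)I + q ∑ᵢ eᵢ e_{g(i)}ᵀ`. -/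
noncomputable def Kmat (N : ℕ) (q : ℝ) (g : Fin N → Fin N) :
    Matrix (Fin N) (Fin N) ℝ :=
  (1 - q) • (1 : Matrix (Fin N) (Fin N) ℝ)
    + q • Matrix.of fun i j => if g i = j then (1 : ℝ) else 0

namespace RandomMap

variable {ι κ : Type*}

def funMatrix (R : Type*) [Zero R] [One R] [DecidableEq κ] (g : ι → κ) : Matrix ι κ R :=
  Matrix.of fun i j => if g i = j then 1 else 0

variable {R : Type*} [CommRing R] [Fintype ι] [DecidableEq ι] [Fintype κ]

theorem sum_prod_mul_prod (P : Matrix ι κ R) (f : ι → κ → R) :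
    ∑ g : ι → κ, (∏ i, P i (g i)) * ∏ i, f i (g i) = ∏ i, ∑ j, P i j * f i j := by
  simp only [Fintype.prod_sum, ← Finset.prod_mul_distrib]

theorem sum_prod_mul_prod_finset (P : Matrix ι κ R) (hP : ∀ i, ∑ j, P i j = 1)
    (s : Finset ι) (f : ι → κ → R) :
    ∑ g : ι → κ, (∏ i, P i (g i)) * ∏ i ∈ s, f i (g i) = ∏ i ∈ s, ∑ j, P i j * f i j := by
  have hrow : ∀ i, ∑ j, P i j * (if i ∈ s then f i j else 1)
      = if i ∈ s then ∑ j, P i j * f i j else 1 := by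
    intro i; split_ifs <;> simp [hP]
  simp only [← Fintype.prod_ite_mem s, sum_prod_mul_prod P fun i j => if i ∈ s then f i j else 1,
    hrow]

theorem sum_prod_apply_eq_one (P : Matrix ι κ R) (hP : ∀ i, ∑ j, P i j = 1) :
    ∑ g : ι → κ, ∏ i, P i (g i) = 1 := by
  simpa using sum_prod_mul_prod_finset P hP ∅ fun _ _ => 1

theorem sum_prod_mul_apply (P : Matrix ι κ R) (hP : ∀ i, ∑ j, P i j = 1) (k : ι) (f : κ → R) :
    ∑ g : ι → κ, (∏ i, P i (g i)) * f (g k) = ∑ j, P k j * f j := by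
  simpa using sum_prod_mul_prod_finset P hP {k} fun _ => f

theorem sum_prod_mul_apply_mul_apply (P : Matrix ι κ R) (hP : ∀ i, ∑ j, P i j = 1) {k l : ι}
    (hkl : k ≠ l) (f h : κ → R) :
    ∑ g : ι → κ, (∏ i, P i (g i)) * (f (g k) * h (g l))
      = (∑ j, P k j * f j) * ∑ j, P l j * h j := by
  simpa [Finset.prod_pair hkl, hkl.symm] using
    sum_prod_mul_prod_finset P hP {k, l} fun i => if i = k then f else h

variable [DecidableEq κ]

theorem sum_prod_smul_funMatrix (P : Matrix ι κ R) (hP : ∀ i, ∑ j, P i j = 1) :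
    ∑ g : ι → κ, (∏ i, P i (g i)) • funMatrix R g = P := by
  ext k a
  simp only [Matrix.sum_apply, Matrix.smul_apply, funMatrix, Matrix.of_apply, smul_eq_mul]
  exact (sum_prod_mul_apply P hP k fun b => if b = a then 1 else 0).trans (by simp)

theorem sum_prod_mul_indicator_mul_indicator (P : Matrix ι κ R) (hP : ∀ i, ∑ j, P i j = 1)
    (k l : ι) (a b : κ) :
    ∑ g : ι → κ, (∏ i, P i (g i)) * ((if g k = a then 1 else 0) * (if g l = b then 1 else 0))
      = if k = l then (if a = b then P k a else 0) else P k a * P l b := by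
  by_cases hkl : k = l
  · subst hkl
    rw [if_pos rfl]
    refine (sum_prod_mul_apply P hP k fun c =>
      (if c = a then 1 else 0) * (if c = b then 1 else 0)).trans ?_
    split_ifs with hab
    · subst hab; simp
    · simp [Ne.symm hab]
  · rw [if_neg hkl]
    exact (sum_prod_mul_apply_mul_apply P hP hkl (fun c => if c = a then 1 else 0)
      fun c => if c = b then 1 else 0).trans (by simp)

theorem sum_prod_smul_transpose_funMatrix_mul_mul (P : Matrix ι κ R) (hP : ∀ i, ∑ j, P i j = 1)
    (Y : Matrix ι ι R) :
    ∑ g : ι → κ, (∏ i, P i (g i)) • ((funMatrix R g)ᵀ * Y * funMatrix R g)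
      = Pᵀ * Y * P + Matrix.diagonal (Pᵀ *ᵥ Matrix.diag Y)
          - Pᵀ * Matrix.diagonal (Matrix.diag Y) * P := by
  ext a b
  have hentry : ∀ g : ι → κ, ((funMatrix R g)ᵀ * Y * funMatrix R g) a b
      = ∑ k, ∑ l, Y k l * ((if g k = a then 1 else 0) * (if g l = b then 1 else 0)) := by
    intro g
    simp only [Matrix.mul_apply, funMatrix, Matrix.transpose_apply, Matrix.of_apply, Finset.sum_mul]
    rw [Finset.sum_comm]
    refine Finset.sum_congr rfl fun k _ => Finset.sum_congr rfl fun l _ => ?_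
    ring
  have hsplit : ∀ k l, Y k l * (if k = l then (if a = b then P k a else 0) else P k a * P l b)
      = P k a * Y k l * P l b
        + if k = l then (if a = b then P k a * Y k k else 0) - P k a * Y k k * P k b else 0 := by
    intro k l
    by_cases hkl : k = l
    · subst hkl; split_ifs <;> ring
    · simp only [if_neg hkl]; ring
  have hPYP : (Pᵀ * Y * P) a b = ∑ k, ∑ l, P k a * Y k l * P l b := by
    simp only [Matrix.mul_apply, Matrix.transpose_apply, Finset.sum_mul]
    exact Finset.sum_comm
  have hdiag : Matrix.diagonal (Pᵀ *ᵥ Matrix.diag Y) a b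
      = if a = b then ∑ k, P k a * Y k k else 0 := by
    simp [Matrix.diagonal_apply, Matrix.mulVec, dotProduct]
  have hPdP : (Pᵀ * Matrix.diagonal (Matrix.diag Y) * P) a b = ∑ k, P k a * Y k k * P k b := by
    simp only [Matrix.mul_apply (M := _ * _), Matrix.mul_diagonal, Matrix.transpose_apply,
      Matrix.diag_apply]
  rw [Matrix.sum_apply, Matrix.sub_apply, Matrix.add_apply, hPYP, hdiag, hPdP]
  simp only [Matrix.smul_apply, smul_eq_mul]
  calc ∑ g : ι → κ, (∏ i, P i (g i)) * ((funMatrix R g)ᵀ * Y * funMatrix R g) a b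
      = ∑ k, ∑ l, Y k l * ∑ g : ι → κ, (∏ i, P i (g i))
          * ((if g k = a then 1 else 0) * (if g l = b then 1 else 0)) := by
        simp only [hentry, Finset.mul_sum]
        rw [Finset.sum_comm]
        refine Finset.sum_congr rfl fun k _ => ?_
        rw [Finset.sum_comm]
        exact Finset.sum_congr rfl fun l _ => Finset.sum_congr rfl fun g _ => by ring
    _ = _ := by
        simp only [sum_prod_mul_indicator_mul_indicator P hP, hsplit, Finset.sum_add_distrib,
          Finset.sum_ite_eq, Finset.mem_univ, if_true, Finset.sum_sub_distrib,
          Finset.sum_ite_irrel, Finset.sum_const_zero]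
        ring

end RandomMap

open RandomMap

theorem sum_prod_smul_transpose_Kmat_mul_mul {N : ℕ} (P : Matrix (Fin N) (Fin N) ℝ)
    (hP : ∀ i, ∑ j, P i j = 1) (q : ℝ) (Y : Matrix (Fin N) (Fin N) ℝ) :
    ∑ g : Fin N → Fin N, (∏ i, P i (g i)) • ((Kmat N q g)ᵀ * Y * Kmat N q g)
      = PhiStar P q Y := by
  have hK : ∀ g, (Kmat N q g)ᵀ * Y * Kmat N q g
      = (1 - q) ^ 2 • Y + ((1 - q) * q) • (Y * funMatrix ℝ g)
        + ((1 - q) * q) • ((funMatrix ℝ g)ᵀ * Y)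
        + q ^ 2 • ((funMatrix ℝ g)ᵀ * Y * funMatrix ℝ g) := by
    intro g
    change ((1 - q) • 1 + q • funMatrix ℝ g)ᵀ * Y * ((1 - q) • 1 + q • funMatrix ℝ g) = _
    simp only [transpose_add, transpose_smul, transpose_one, add_mul, mul_add, Matrix.smul_mul,
      Matrix.mul_smul, Matrix.one_mul, Matrix.mul_one]
    module
  have hYE : ∑ g : Fin N → Fin N, (∏ i, P i (g i)) • (Y * funMatrix ℝ g) = Y * P := by
    conv_rhs => rw [← sum_prod_smul_funMatrix P hP, Matrix.mul_sum]
    simp only [Matrix.mul_smul]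
  have hEY : ∑ g : Fin N → Fin N, (∏ i, P i (g i)) • ((funMatrix ℝ g)ᵀ * Y) = Pᵀ * Y := by
    conv_rhs => rw [← sum_prod_smul_funMatrix P hP, transpose_sum, Finset.sum_mul]
    simp only [transpose_smul, Matrix.smul_mul]
  have hpull : ∀ (c : ℝ) (X : (Fin N → Fin N) → Matrix (Fin N) (Fin N) ℝ),
      ∑ g, (∏ i, P i (g i)) • c • X g = c • ∑ g, (∏ i, P i (g i)) • X g := by
    intro c X
    simp only [Finset.smul_sum, smul_comm c]
  simp only [hK, smul_add, Finset.sum_add_distrib, hpull, hYE, hEY,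
    sum_prod_smul_transpose_funMatrix_mul_mul P hP]
  rw [← Finset.sum_smul, sum_prod_apply_eq_one P hP, one_smul]
  simp only [PhiStar, transpose_add, transpose_smul, transpose_one, add_mul, mul_add,
    Matrix.smul_mul, Matrix.mul_smul, Matrix.one_mul, Matrix.mul_one]
  module

theorem sum_prod_smul_transpose_prod_ofFn_mul_mul {α n R : Type*} [Fintype α] [Fintype n]
    [DecidableEq n] [CommRing R] (w : α → R) (K : α → Matrix n n R)
    (Φ : Matrix n n R → Matrix n n R) (hΦ : ∀ Y, ∑ a, w a • ((K a)ᵀ * Y * K a) = Φ Y)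
    (t : ℕ) (Y : Matrix n n R) :
    ∑ g : Fin t → α, (∏ s, w (g s)) •
        ((List.ofFn fun s => K (g s)).prodᵀ * Y * (List.ofFn fun s => K (g s)).prod)
      = Φ^[t] Y := by
  induction t generalizing Y with
  | zero => simp
  | succ t ih =>
    rw [Function.iterate_succ_apply, ← ih, ← (Fin.consEquiv fun _ => α).sum_comp,
      Fintype.sum_prod_type, Finset.sum_comm]
    refine Finset.sum_congr rfl fun g _ => ?_
    simp only [Fin.consEquiv_apply, Fin.prod_univ_succ, Fin.cons_zero, Fin.cons_succ,
      List.ofFn_succ, List.prod_cons, transpose_mul]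
    rw [← hΦ, Matrix.mul_sum, Matrix.sum_mul, Finset.smul_sum]
    refine Finset.sum_congr rfl fun a _ => ?_
    simp only [Matrix.mul_smul, Matrix.smul_mul, smul_smul, Matrix.mul_assoc, mul_comm]

theorem sum_sq_apply_eq_trace_transpose_mul_self {m n R : Type*} [Fintype m] [Fintype n]
    [CommSemiring R] (M : Matrix m n R) :
    ∑ i, ∑ j, M i j ^ 2 = (Mᵀ * M).trace := by
  simp only [trace, diag_apply, mul_apply, transpose_apply, sq]
  exact Finset.sum_comm

section Centering

variable (n R : Type*) [Fintype n] [DecidableEq n] [Field R]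

def centeringMatrix : Matrix n n R := 1 - of fun _ _ => (Fintype.card n : R)⁻¹

theorem isSymm_centeringMatrix : (centeringMatrix n R).IsSymm := by
  rw [Matrix.IsSymm, centeringMatrix, transpose_sub, transpose_one]
  rfl

variable [CharZero R]

theorem isIdempotentElem_centeringMatrix : IsIdempotentElem (centeringMatrix n R) := by
  have hJ : (of fun _ _ => (Fintype.card n : R)⁻¹ : Matrix n n R)
      * of (fun _ _ => (Fintype.card n : R)⁻¹) = of fun _ _ => (Fintype.card n : R)⁻¹ := by
    ext i j
    have : Nonempty n := ⟨i⟩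
    have : (Fintype.card n : R) ≠ 0 := Nat.cast_ne_zero.mpr Fintype.card_ne_zero
    simp [mul_apply]
  simp only [IsIdempotentElem, centeringMatrix, sub_mul, mul_sub, Matrix.one_mul, Matrix.mul_one,
    hJ]
  abel

variable {n R}

theorem transpose_centeringMatrix_mul_mul_self (H : Matrix n n R) :
    (centeringMatrix n R * H)ᵀ * (centeringMatrix n R * H) = Hᵀ * centeringMatrix n R * H := by
  rw [transpose_mul, (isSymm_centeringMatrix n R).eq, Matrix.mul_assoc, ← Matrix.mul_assoc _ _ H,
    (isIdempotentElem_centeringMatrix n R).eq, Matrix.mul_assoc]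

end Centering

theorem stmt15_general (N : ℕ) (P : Matrix (Fin N) (Fin N) ℝ)
    (hProw : ∀ i, ∑ j, P i j = 1)
    (q : ℝ) (t : ℕ) :
    ∑ g : Fin t → (Fin N → Fin N),
        (∏ s, ∏ i, P i (g s i)) *
          (∑ i, ∑ j,
            ((((1 : Matrix (Fin N) (Fin N) ℝ) - Matrix.of fun _ _ => (N : ℝ)⁻¹) *
                (List.ofFn fun s => Kmat N q (g s)).prod
              : Matrix (Fin N) (Fin N) ℝ) i j ^ 2))
      = ((PhiStar P q)^[t]
          ((1 : Matrix (Fin N) (Fin N) ℝ) - Matrix.of fun _ _ => (N : ℝ)⁻¹)).trace := by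
  have hC : (1 - of fun _ _ => (N : ℝ)⁻¹ : Matrix (Fin N) (Fin N) ℝ)
      = centeringMatrix (Fin N) ℝ := by
    rw [centeringMatrix, Fintype.card_fin]
  rw [hC, ← sum_prod_smul_transpose_prod_ofFn_mul_mul (fun g => ∏ i, P i (g i)) (Kmat N q)
    (PhiStar P q) (sum_prod_smul_transpose_Kmat_mul_mul P hProw q), trace_sum]
  refine Finset.sum_congr rfl fun g _ => ?_
  rw [trace_smul, smul_eq_mul, sum_sq_apply_eq_trace_transpose_mul_self,
    transpose_centeringMatrix_mul_mul_self]

/-- `E[‖(I−J)H(t)‖_F²] = Tr((Φ*)ᵗ(I−J))`, where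
`H(t) = K(1)⋯K(t)` is a product of `t` i.i.d. copies of `K`; the expectation
is written out as the sum over all `t`-tuples of maps `g : [N] → [N]`, each
weighted by its probability `∏ₛ ∏ᵢ p_{i, gₛ(i)}`. -/
theorem stmt15 (N : ℕ) (hN : 1 ≤ N) (P : Matrix (Fin N) (Fin N) ℝ)
    (hPnonneg : ∀ i j, 0 ≤ P i j) (hProw : ∀ i, ∑ j, P i j = 1)
    (q : ℝ) (hq0 : 0 ≤ q) (hq1 : q ≤ 1) (t : ℕ) :
    ∑ g : Fin t → (Fin N → Fin N),
        (∏ s, ∏ i, P i (g s i)) *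
          (∑ i, ∑ j,
            ((((1 : Matrix (Fin N) (Fin N) ℝ) - Matrix.of fun _ _ => (N : ℝ)⁻¹) *
                (List.ofFn fun s => Kmat N q (g s)).prod
              : Matrix (Fin N) (Fin N) ℝ) i j ^ 2))
      = ((PhiStar P q)^[t]
          ((1 : Matrix (Fin N) (Fin N) ℝ) - Matrix.of fun _ _ => (N : ℝ)⁻¹)).trace :=
  stmt15_general N P hProw q t
end

section
/- Suppose P is symmetric, row-stochastic, and for every integer k ≥ 0 the diagonal entries of P^k are all equal (as holds when P is transitive). Define X_t = (Φ*)^t(I−J) for t ≥ 0. Then for every t: (i) all diagonal entries of X_t are equal, to r_t := Tr(X_t)/N; and (ii) X_{t+1} = P_q X_t P_q + q² r_t (I − P²). -/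
open Matrix BigOperators

section Aux

variable {N : ℕ} (P : Matrix (Fin N) (Fin N) ℝ)

lemma diagonal_const_eq (r : ℝ) :
    (Matrix.diagonal (fun _ : Fin N => r)) = r • (1 : Matrix (Fin N) (Fin N) ℝ) := by
  ext i j
  by_cases h : i = j <;>
    simp [Matrix.diagonal, Matrix.one_apply, h]

/-- Key computation: on matrices with constant diagonal `r`, `Φ*` simplifies. -/
lemma phiStar_const_diag (hPsymm : Pᵀ = P) (hProw : ∀ i, ∑ j, P i j = 1)
    (q : ℝ) (Y : Matrix (Fin N) (Fin N) ℝ) (r : ℝ) (hY : ∀ i, Y i i = r) :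
    PhiStar P q Y =
      ((1 - q) • (1 : Matrix (Fin N) (Fin N) ℝ) + q • P) * Y *
        ((1 - q) • (1 : Matrix (Fin N) (Fin N) ℝ) + q • P)
      + (q ^ 2 * r) • ((1 : Matrix (Fin N) (Fin N) ℝ) - P ^ 2) := by
  have hdiag : Matrix.diag Y = fun _ => r := funext fun i => hY i
  have hcol : ∀ i, ∑ j, P j i = 1 := by
    intro i
    have := hProw i
    calc ∑ j, P j i = ∑ j, Pᵀ i j := by simp [Matrix.transpose_apply]
    _ = ∑ j, P i j := by rw [hPsymm]
    _ = 1 := hProw i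
  have hmv : Pᵀ *ᵥ (fun _ : Fin N => r) = fun _ => r := by
    funext i
    simp only [Matrix.mulVec, dotProduct, Matrix.transpose_apply]
    rw [← Finset.sum_mul, hcol i, one_mul]
  have htrans : ((1 - q) • (1 : Matrix (Fin N) (Fin N) ℝ) + q • P)ᵀ
      = (1 - q) • (1 : Matrix (Fin N) (Fin N) ℝ) + q • P := by
    simp [Matrix.transpose_add, Matrix.transpose_smul, hPsymm]
  rw [PhiStar, htrans, hdiag, hmv, diagonal_const_eq]
  congr 1
  rw [Matrix.mul_smul, Matrix.smul_mul, Matrix.mul_one, hPsymm, smul_sub, smul_smul,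
    smul_sub, smul_smul]
  congr 2
  rw [pow_two]

variable (q : ℝ)

/-- The span of `J` and the powers of `P`. -/
noncomputable def mSpan : Submodule ℝ (Matrix (Fin N) (Fin N) ℝ) :=
  Submodule.span ℝ
    (insert (Matrix.of fun _ _ => (N : ℝ)⁻¹) (Set.range fun k : ℕ => P ^ k))

lemma powMemSpan (k : ℕ) : P ^ k ∈ mSpan P := by
  exact Submodule.subset_span (Set.mem_insert_iff.mpr (Or.inr ⟨k, rfl⟩))

lemma J_mem : (Matrix.of fun _ _ => (N : ℝ)⁻¹) ∈ mSpan P :=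
  Submodule.subset_span (Set.mem_insert _ _)

lemma P_mul_J (hProw : ∀ i, ∑ j, P i j = 1) :
    P * (Matrix.of fun _ _ => (N : ℝ)⁻¹) = Matrix.of fun _ _ => (N : ℝ)⁻¹ := by
  ext i j
  simp only [Matrix.mul_apply, Matrix.of_apply]
  rw [← Finset.sum_mul, hProw i, one_mul]

lemma J_mul_P (hPsymm : Pᵀ = P) (hProw : ∀ i, ∑ j, P i j = 1) :
    (Matrix.of fun _ _ => (N : ℝ)⁻¹) * P = Matrix.of fun _ _ => (N : ℝ)⁻¹ := by
  have hcol : ∀ i, ∑ j, P j i = 1 := by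
    intro i
    calc ∑ j, P j i = ∑ j, Pᵀ i j := by simp [Matrix.transpose_apply]
    _ = ∑ j, P i j := by rw [hPsymm]
    _ = 1 := hProw i
  ext i j
  simp only [Matrix.mul_apply, Matrix.of_apply]
  rw [← Finset.mul_sum, hcol j, mul_one]

/-- `mSpan` is closed under `X ↦ P_q X P_q`. -/
lemma sandwich_mem (hPsymm : Pᵀ = P) (hProw : ∀ i, ∑ j, P i j = 1)
    {X : Matrix (Fin N) (Fin N) ℝ} (hX : X ∈ mSpan P) :
    ((1 - q) • (1 : Matrix (Fin N) (Fin N) ℝ) + q • P) * X *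
      ((1 - q) • (1 : Matrix (Fin N) (Fin N) ℝ) + q • P) ∈ mSpan P := by
  obtain ⟨Q, hQ⟩ : ∃ Q : Matrix (Fin N) (Fin N) ℝ,
      Q = (1 - q) • (1 : Matrix (Fin N) (Fin N) ℝ) + q • P := ⟨_, rfl⟩
  rw [← hQ]
  induction hX using Submodule.span_induction with
  | mem x hx =>
    rcases Set.mem_insert_iff.mp hx with h | ⟨k, rfl⟩
    · subst h
      have h1 : Q * (Matrix.of fun _ _ => (N : ℝ)⁻¹) = Matrix.of fun _ _ => (N : ℝ)⁻¹ := by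
        rw [hQ, Matrix.add_mul, Matrix.smul_mul, Matrix.smul_mul, Matrix.one_mul,
          P_mul_J P hProw, ← add_smul, sub_add_cancel, one_smul]
      have h2 : (Matrix.of fun _ _ => (N : ℝ)⁻¹) * Q = Matrix.of fun _ _ => (N : ℝ)⁻¹ := by
        rw [hQ, Matrix.mul_add, Matrix.mul_smul, Matrix.mul_smul, Matrix.mul_one,
          J_mul_P P hPsymm hProw, ← add_smul, sub_add_cancel, one_smul]
      rw [h1, h2]
      exact J_mem P
    · have h1 : Q * P ^ k = (1 - q) • P ^ k + q • P ^ (k + 1) := by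
        rw [hQ, Matrix.add_mul, Matrix.smul_mul, Matrix.smul_mul, Matrix.one_mul,
          pow_succ']
      have h2 : Q * P ^ k * Q
          = (1 - q) • ((1 - q) • P ^ k + q • P ^ (k + 1))
            + q • ((1 - q) • P ^ (k + 1) + q • P ^ (k + 2)) := by
        rw [h1, Matrix.add_mul, Matrix.smul_mul, Matrix.smul_mul, hQ]
        congr 1
        · rw [Matrix.mul_add, Matrix.mul_smul, Matrix.mul_smul, Matrix.mul_one,
            ← pow_succ, smul_add]
        · rw [Matrix.mul_add, Matrix.mul_smul, Matrix.mul_smul, Matrix.mul_one,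
            ← pow_succ, smul_add]
      rw [h2]
      exact Submodule.add_mem _
        (Submodule.smul_mem _ _ (Submodule.add_mem _
          (Submodule.smul_mem _ _ (powMemSpan P k))
          (Submodule.smul_mem _ _ (powMemSpan P (k + 1)))))
        (Submodule.smul_mem _ _ (Submodule.add_mem _
          (Submodule.smul_mem _ _ (powMemSpan P (k + 1)))
          (Submodule.smul_mem _ _ (powMemSpan P (k + 2)))))
  | zero => simpa using Submodule.zero_mem (mSpan P)
  | add x y hx hy ihx ihy =>
    rw [Matrix.mul_add, Matrix.add_mul]
    exact Submodule.add_mem _ ihx ihy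
  | smul a x hx ihx =>
    rw [Matrix.mul_smul, Matrix.smul_mul]
    exact Submodule.smul_mem _ _ ihx

/-- Elements of `mSpan` have constant diagonal. -/
lemma const_diag_of_mem (hPdiag : ∀ k : ℕ, ∀ i j : Fin N, (P ^ k) i i = (P ^ k) j j)
    {X : Matrix (Fin N) (Fin N) ℝ} (hX : X ∈ mSpan P) :
    ∀ i j : Fin N, X i i = X j j := by
  induction hX using Submodule.span_induction with
  | mem x hx =>
    rcases Set.mem_insert_iff.mp hx with h | ⟨k, rfl⟩
    · subst h; intro i j; simp
    · exact hPdiag k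
  | zero => intro i j; simp
  | add x y hx hy ihx ihy => intro i j; simp [Matrix.add_apply, ihx i j, ihy i j]
  | smul a x hx ihx => intro i j; simp [Matrix.smul_apply, ihx i j]

/-- `mSpan` is closed under `Φ*`. -/
lemma phiStar_mem (hPsymm : Pᵀ = P) (hProw : ∀ i, ∑ j, P i j = 1)
    (hPdiag : ∀ k : ℕ, ∀ i j : Fin N, (P ^ k) i i = (P ^ k) j j) (hN : 1 ≤ N)
    {X : Matrix (Fin N) (Fin N) ℝ} (hX : X ∈ mSpan P) :
    PhiStar P q X ∈ mSpan P := by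
  have i0 : Fin N := ⟨0, hN⟩
  have hcd := const_diag_of_mem P hPdiag hX
  rw [phiStar_const_diag P hPsymm hProw q X (X i0 i0) (fun i => hcd i i0)]
  refine Submodule.add_mem _ (sandwich_mem P q hPsymm hProw hX) ?_
  refine Submodule.smul_mem _ _ (Submodule.sub_mem _ ?_ ?_)
  · have := powMemSpan P 0
    simpa using this
  · exact powMemSpan P 2

end Aux

/-- For symmetric stochastic `P` whose powers have constant
diagonals, `X_t = (Φ*)ᵗ(I−J)` has constant diagonal `r_t = Tr(X_t)/N` and
satisfies `X_{t+1} = P_q X_t P_q + q² r_t (I − P²)`. -/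
theorem stmt17 (N : ℕ) (hN : 1 ≤ N) (P : Matrix (Fin N) (Fin N) ℝ)
    (hPnonneg : ∀ i j, 0 ≤ P i j) (hProw : ∀ i, ∑ j, P i j = 1)
    (hPsymm : Pᵀ = P)
    (hPdiag : ∀ k : ℕ, ∀ i j : Fin N, (P ^ k) i i = (P ^ k) j j)
    (q : ℝ) (hq0 : 0 ≤ q) (hq1 : q ≤ 1) (t : ℕ) :
    (∀ i : Fin N,
        ((PhiStar P q)^[t]
            ((1 : Matrix (Fin N) (Fin N) ℝ) - Matrix.of fun _ _ => (N : ℝ)⁻¹)) i i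
          = ((PhiStar P q)^[t]
              ((1 : Matrix (Fin N) (Fin N) ℝ) - Matrix.of fun _ _ => (N : ℝ)⁻¹)).trace / N)
      ∧ (PhiStar P q)^[t + 1]
            ((1 : Matrix (Fin N) (Fin N) ℝ) - Matrix.of fun _ _ => (N : ℝ)⁻¹)
          = ((1 - q) • (1 : Matrix (Fin N) (Fin N) ℝ) + q • P) *
              ((PhiStar P q)^[t]
                ((1 : Matrix (Fin N) (Fin N) ℝ) - Matrix.of fun _ _ => (N : ℝ)⁻¹)) *
              ((1 - q) • (1 : Matrix (Fin N) (Fin N) ℝ) + q • P)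
            + (q ^ 2 *
                (((PhiStar P q)^[t]
                  ((1 : Matrix (Fin N) (Fin N) ℝ) - Matrix.of fun _ _ => (N : ℝ)⁻¹)).trace / N)) •
                ((1 : Matrix (Fin N) (Fin N) ℝ) - P ^ 2) := by
  set X0 : Matrix (Fin N) (Fin N) ℝ :=
    (1 : Matrix (Fin N) (Fin N) ℝ) - Matrix.of fun _ _ => (N : ℝ)⁻¹ with hX0
  have hX0mem : X0 ∈ mSpan P := by
    refine Submodule.sub_mem _ ?_ (J_mem P)
    have := powMemSpan P 0
    simpa using this
  have hXt : ∀ s : ℕ, (PhiStar P q)^[s] X0 ∈ mSpan P := by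
    intro s
    induction s with
    | zero => simpa using hX0mem
    | succ n ih =>
      rw [Function.iterate_succ_apply']
      exact phiStar_mem P q hPsymm hProw hPdiag hN ih
  set X := (PhiStar P q)^[t] X0 with hX
  have hcd := const_diag_of_mem P hPdiag (hXt t)
  have hNr : (0 : ℝ) < (N : ℝ) := by exact_mod_cast Nat.lt_of_lt_of_le Nat.zero_lt_one hN
  have htrace : ∀ i : Fin N, X i i = X.trace / N := by
    intro i
    have : X.trace = (N : ℝ) * X i i := by
      rw [Matrix.trace]
      calc ∑ j, Matrix.diag X j = ∑ _j : Fin N, X i i :=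
            Finset.sum_congr rfl fun j _ => hcd j i
      _ = (N : ℝ) * X i i := by simp [mul_comm]
    rw [this]
    field_simp
  constructor
  · exact htrace
  · have i0 : Fin N := ⟨0, hN⟩
    rw [Function.iterate_succ_apply', ← hX,
      phiStar_const_diag P hPsymm hProw q X (X.trace / N) htrace]
end

section
/- Let λ₁ = 1 and λ₂, …, λ_N ∈ ℝ be arbitrary, q ∈ ℝ, and set λ_{q,i} = (1−q) + qλ_i, b = (1−λ₁², …, 1−λ_N²)ᵀ (so b₁ = 0), and D = diag(λ_{q,1}², …, λ_{q,N}²). Then the characteristic polynomial of the N×N matrix M = D + (q²/N)·b𝟙ᵀ factors as det(xI − M) = (x − 1)·f(x), where f(x) = ∏_{i=2}^N (x − λ_{q,i}²) − (q²/N) Σ_{i=2}^N (1 − λ_i²) ∏_{2 ≤ j ≤ N, j ≠ i} (x − λ_{q,j}²). -/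
open Matrix BigOperators Polynomial

section Aux

variable {n : Type*} [Fintype n] [DecidableEq n] {R : Type*} [CommRing R]

private lemma aux_det_zero_of_rows_smul {M : Matrix n n R} {i j : n} (hij : i ≠ j)
    {c c' : R} {w : n → R} (hi : M i = c • w) (hj : M j = c' • w) : M.det = 0 := by
  have h1 : M = M.updateRow i (c • w) := by rw [← hi, Matrix.updateRow_eq_self]
  rw [h1, Matrix.det_updateRow_smul]
  have hj' : (M.updateRow i w) j = c' • w := by rw [Matrix.updateRow_ne hij.symm, hj]
  have h2 : M.updateRow i w = (M.updateRow i w).updateRow j (c' • w) := by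
    rw [← hj', Matrix.updateRow_eq_self]
  rw [h2, Matrix.det_updateRow_smul]
  have hrows : ((M.updateRow i w).updateRow j w) i = ((M.updateRow i w).updateRow j w) j := by
    rw [Matrix.updateRow_ne hij, Matrix.updateRow_self, Matrix.updateRow_self]
  rw [Matrix.det_zero_of_row_eq hij hrows, mul_zero, mul_zero]

private lemma aux_det_updateRow_diagonal (d : n → R) (i : n) (v : n → R) :
    (Matrix.updateRow (Matrix.diagonal d) i v).det
      = v i * ∏ j ∈ Finset.univ.erase i, d j := by
  rw [← Matrix.cramer_transpose_apply, Matrix.diagonal_transpose]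
  have hv : v = ∑ k, Pi.single k (v k) := by
    ext j; simp [Pi.single_apply]
  have hsum : Matrix.cramer (Matrix.diagonal d) v
      = ∑ k, Matrix.cramer (Matrix.diagonal d) (Pi.single k (v k)) := by
    rw [← map_sum, ← hv]
  rw [hsum, Finset.sum_apply]
  have hterm : ∀ k : n, k ≠ i →
      Matrix.cramer (Matrix.diagonal d) (Pi.single k (v k)) i = 0 := by
    intro k hk
    rw [Matrix.cramer_apply]
    refine Matrix.det_eq_zero_of_row_eq_zero i fun l => ?_
    by_cases hl : l = i
    · subst hl
      rw [Matrix.updateCol_self, Pi.single_eq_of_ne (Ne.symm hk)]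
    · rw [Matrix.updateCol_ne hl, Matrix.diagonal_apply_ne' _ hl]
  rw [Finset.sum_eq_single i (fun k _ hk => hterm k hk) (by simp)]
  rw [Matrix.cramer_apply, Matrix.diagonal_updateCol_single, Matrix.det_diagonal]
  rw [← Finset.mul_prod_erase _ _ (Finset.mem_univ i), Function.update_self]
  congr 1
  refine Finset.prod_congr rfl fun j hj => ?_
  rw [Function.update_of_ne (Finset.ne_of_mem_erase hj)]

private lemma aux_det_diagonal_add_vecMulVec (d u v : n → R) :
    (Matrix.diagonal d + Matrix.vecMulVec u v).det
      = ∏ i, d i + ∑ i, u i * (v i * ∏ j ∈ Finset.univ.erase i, d j) := by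
  classical
  set f : n → n → R := fun i => u i • v with hf
  set g : n → n → R := fun i => Matrix.diagonal d i with hg
  have hrow : (Matrix.diagonal d + Matrix.vecMulVec u v : Matrix n n R) = f + g := by
    ext i j
    simp [hf, hg, Matrix.add_apply, Matrix.vecMulVec_apply, add_comm]
  have hdet : (Matrix.diagonal d + Matrix.vecMulVec u v).det
      = (Matrix.detRowAlternating : (n → R) [⋀^n]→ₗ[R] R).toMultilinearMap (f + g) := by
    rw [← hrow]; rfl
  rw [hdet, MultilinearMap.map_add_univ]
  have hzero : ∀ s : Finset n, s ∉ insert (∅ : Finset n) (Finset.univ.image fun i => ({i} : Finset n)) →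
      (Matrix.detRowAlternating : (n → R) [⋀^n]→ₗ[R] R).toMultilinearMap (s.piecewise f g) = 0 := by
    intro s hs
    simp only [Finset.mem_insert, Finset.mem_image, Finset.mem_univ, true_and, not_or,
      not_exists] at hs
    have hcard : 1 < s.card := by
      rcases Nat.lt_or_ge 1 s.card with h | h
      · exact h
      · interval_cases h' : s.card
        · exact absurd (Finset.card_eq_zero.mp h') hs.1
        · obtain ⟨a, ha⟩ := Finset.card_eq_one.mp h'
          exact absurd ha.symm (hs.2 a)
    obtain ⟨a, ha, b, hb, hab⟩ := Finset.one_lt_card.mp hcard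
    have := aux_det_zero_of_rows_smul (M := Matrix.of (s.piecewise f g)) hab
      (c := u a) (c' := u b) (w := v)
      (show Matrix.of (s.piecewise f g) a = u a • v from Finset.piecewise_eq_of_mem s f g ha)
      (show Matrix.of (s.piecewise f g) b = u b • v from Finset.piecewise_eq_of_mem s f g hb)
    exact this
  rw [← Finset.sum_subset (Finset.subset_univ _) (fun s _ hs => hzero s hs)]
  have hempty_notmem : (∅ : Finset n) ∉ Finset.univ.image (fun i => ({i} : Finset n)) := by
    simp
  rw [Finset.sum_insert hempty_notmem,
    Finset.sum_image (fun i _ j _ h => Finset.singleton_injective h)]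
  congr 1
  · rw [Finset.piecewise_empty]
    exact Matrix.det_diagonal
  · refine Finset.sum_congr rfl fun i _ => ?_
    have hpiece : ({i} : Finset n).piecewise f g = Matrix.updateRow (Matrix.diagonal d) i (u i • v) := by
      rw [Finset.piecewise_singleton]; rfl
    rw [hpiece]
    have : (Matrix.detRowAlternating : (n → R) [⋀^n]→ₗ[R] R).toMultilinearMap
        (Matrix.updateRow (Matrix.diagonal d) i (u i • v))
        = (Matrix.updateRow (Matrix.diagonal d) i (u i • v)).det := rfl
    rw [this, Matrix.det_updateRow_smul, aux_det_updateRow_diagonal]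

end Aux

/-- With `λ₁ = 1`, `λ_{q,i} = (1−q)+qλᵢ`, `bᵢ = 1−λᵢ²` and
`D = diag(λ_{q,1}², …, λ_{q,N}²)`, the characteristic polynomial of
`M = D + (q²/N) b 𝟙ᵀ` factors as `det(xI − M) = (x − 1) f(x)` with
`f(x) = ∏_{i≥2}(x − λ_{q,i}²) − (q²/N) ∑_{i≥2}(1−λᵢ²) ∏_{j≥2, j≠i}(x − λ_{q,j}²)`. -/
theorem stmt19 (N : ℕ) (hN : 1 ≤ N) (lam : Fin N → ℝ)
    (hlam1 : lam ⟨0, hN⟩ = 1) (q : ℝ) :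
    (Matrix.diagonal (fun i => ((1 - q) + q * lam i) ^ 2)
        + (q ^ 2 / N) •
            Matrix.vecMulVec (fun i => 1 - lam i ^ 2) (fun _ => (1 : ℝ))).charpoly
      = (Polynomial.X - Polynomial.C 1) *
          (∏ i ∈ Finset.univ.erase ⟨0, hN⟩,
              (Polynomial.X - Polynomial.C (((1 - q) + q * lam i) ^ 2))
            - Polynomial.C (q ^ 2 / N) *
                ∑ i ∈ Finset.univ.erase ⟨0, hN⟩,
                  Polynomial.C (1 - lam i ^ 2) *
                    ∏ j ∈ (Finset.univ.erase ⟨0, hN⟩).erase i,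
                      (Polynomial.X - Polynomial.C (((1 - q) + q * lam j) ^ 2))) := by
  classical
  set i0 : Fin N := ⟨0, hN⟩ with hi0
  set c : ℝ := q ^ 2 / N with hc
  set d : Fin N → ℝ := fun i => ((1 - q) + q * lam i) ^ 2 with hd
  set b : Fin N → ℝ := fun i => 1 - lam i ^ 2 with hb
  have hchar : (Matrix.diagonal d + c • Matrix.vecMulVec b (fun _ => (1 : ℝ))).charmatrix
      = Matrix.diagonal (fun i => (X : ℝ[X]) - C (d i))
        + Matrix.vecMulVec (fun i => C (-(c * b i))) (fun _ => (1 : ℝ[X])) := by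
    ext i j
    by_cases h : i = j
    · subst h
      simp only [Matrix.charmatrix_apply_eq, Matrix.add_apply, Matrix.diagonal_apply_eq,
        Matrix.smul_apply, Matrix.vecMulVec_apply, smul_eq_mul, mul_one, map_add,
        _root_.map_neg, _root_.map_mul]
      ring
    · simp only [Matrix.charmatrix_apply_ne _ _ _ h, Matrix.add_apply,
        Matrix.diagonal_apply_ne _ h, Matrix.smul_apply, Matrix.vecMulVec_apply, smul_eq_mul,
        mul_one, zero_add, map_add, _root_.map_neg, _root_.map_mul]
  rw [Matrix.charpoly, hchar, aux_det_diagonal_add_vecMulVec]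
  have hd0 : d i0 = 1 := by simp [hd, hlam1]
  have hb0 : b i0 = 0 := by simp [hb, hlam1]
  rw [← Finset.mul_prod_erase _ _ (Finset.mem_univ i0),
    ← Finset.add_sum_erase _ _ (Finset.mem_univ i0)]
  rw [hd0, hb0]
  simp only [mul_zero, neg_zero, map_zero, zero_mul, zero_add]
  have hterm : ∀ i ∈ Finset.univ.erase i0,
      C (-(c * b i)) * ((1 : ℝ[X]) * ∏ j ∈ Finset.univ.erase i, ((X : ℝ[X]) - C (d j)))
        = ((X : ℝ[X]) - C 1) *
            (-(C c * (C (b i) * ∏ j ∈ (Finset.univ.erase i0).erase i, ((X : ℝ[X]) - C (d j))))) := by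
    intro i hi
    have hii0 : i ≠ i0 := Finset.ne_of_mem_erase hi
    have hi0mem : i0 ∈ Finset.univ.erase i := Finset.mem_erase.mpr ⟨hii0.symm, Finset.mem_univ i0⟩
    rw [← Finset.mul_prod_erase _ _ hi0mem, hd0]
    have hsets : (Finset.univ.erase i).erase i0 = (Finset.univ.erase i0).erase i := by
      ext x; simp [and_comm, and_left_comm]
    rw [hsets, _root_.map_neg, _root_.map_mul]
    ring
  rw [Finset.sum_congr rfl hterm, ← Finset.mul_sum, Finset.sum_neg_distrib, ← Finset.mul_sum]
  simp only [hd, hb]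
  ring
end
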